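/- arXiv:2310.14368 — 11 statements merged into one kernel-verified Lean document; each statement's English description precedes it below -/
import Mathlib

section
/- For integers n ≥ 1 and 0 ≤ i ≤ ⌊(n+1)/2⌋, the inequality binomial(n+1-i, i) ≥ binomial(n-i, i+1) holds if and only if i ≥ (5n+2 - √(5n²+20n+24))/10. -/
lemma aux_ratio (m i : ℕ) (h : i + 1 ≤ m) :
    m.choose (i + 1) ≤ (m + 1).choose i ↔ (m - i) * (m + 1 - i) ≤ (m + 1) * (i + 1) := by
  have hc : 0 < m.choose i := Nat.choose_pos (by omega)
  have h1 : m.choose (i + 1) * (i + 1) = m.choose i * (m - i) := Nat.choose_succ_right_eq m i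
  have h2 : (m + 1).choose i * (m + 1 - i) = m.choose i * (m + 1) := by
    rw [← Nat.choose_mul_succ_eq]
  constructor
  · intro hle
    have : m.choose (i + 1) * ((i + 1) * (m + 1 - i)) ≤ (m + 1).choose i * ((i + 1) * (m + 1 - i)) :=
      Nat.mul_le_mul_right _ hle
    have h3 : m.choose i * ((m - i) * (m + 1 - i)) ≤ m.choose i * ((m + 1) * (i + 1)) := by
      calc m.choose i * ((m - i) * (m + 1 - i)) = m.choose (i + 1) * (i + 1) * (m + 1 - i) := by
            rw [h1]; ring
        _ ≤ (m + 1).choose i * (m + 1 - i) * (i + 1) := by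
            calc m.choose (i + 1) * (i + 1) * (m + 1 - i)
                = m.choose (i + 1) * ((i + 1) * (m + 1 - i)) := by ring
              _ ≤ (m + 1).choose i * ((i + 1) * (m + 1 - i)) := this
              _ = (m + 1).choose i * (m + 1 - i) * (i + 1) := by ring
        _ = m.choose i * ((m + 1) * (i + 1)) := by rw [h2]; ring
    exact Nat.le_of_mul_le_mul_left h3 hc
  · intro hle
    have h3 : m.choose i * ((m - i) * (m + 1 - i)) ≤ m.choose i * ((m + 1) * (i + 1)) :=
      Nat.mul_le_mul_left _ hle
    have h4 : m.choose (i + 1) * ((i + 1) * (m + 1 - i)) ≤ (m + 1).choose i * ((i + 1) * (m + 1 - i)) := by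
      calc m.choose (i + 1) * ((i + 1) * (m + 1 - i))
            = m.choose (i + 1) * (i + 1) * (m + 1 - i) := by ring
        _ = m.choose i * (m - i) * (m + 1 - i) := by rw [h1]
        _ = m.choose i * ((m - i) * (m + 1 - i)) := by ring
        _ ≤ m.choose i * ((m + 1) * (i + 1)) := h3
        _ = (m + 1).choose i * (m + 1 - i) * (i + 1) := by rw [h2]; ring
        _ = (m + 1).choose i * ((i + 1) * (m + 1 - i)) := by ring
    have hpos : 0 < (i + 1) * (m + 1 - i) := by
      have : 0 < m + 1 - i := by omega
      positivity
    exact Nat.le_of_mul_le_mul_right (by simpa [mul_comm] using h4) hpos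

theorem stmt2 (n i : ℕ) (hn : 1 ≤ n) (hi : i ≤ (n + 1) / 2) :
    (n - i).choose (i + 1) ≤ (n + 1 - i).choose i ↔
      (5 * (n : ℝ) + 2 - Real.sqrt (5 * (n : ℝ) ^ 2 + 20 * (n : ℝ) + 24)) / 10 ≤ (i : ℝ) := by
  have hi2 : 2 * i ≤ n + 1 := by omega
  have key : ((n - i).choose (i + 1) ≤ (n + 1 - i).choose i) ↔
      n ^ 2 + 5 * i ^ 2 ≤ 5 * n * i + 2 * i + 1 := by
    by_cases h : 2 * i + 1 ≤ n
    · have hm : n + 1 - i = (n - i) + 1 := by omega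
      rw [hm, aux_ratio (n - i) i (by omega)]
      have e1 : n - i - i = n - 2 * i := by omega
      have e2 : n - i + 1 - i = n + 1 - 2 * i := by omega
      rw [e1, e2]
      zify [h, (by omega : 2 * i ≤ n), (by omega : i ≤ n), (by omega : 2 * i ≤ n + 1)]
      constructor <;> intro hq <;> nlinarith [hq]
    · have h0 : (n - i).choose (i + 1) = 0 := Nat.choose_eq_zero_of_lt (by omega)
      rw [h0]
      simp only [Nat.zero_le, true_iff]
      zify
      have h1 : (n : ℤ) ≤ 2 * i := by omega
      have h2 : (2 * i : ℤ) ≤ n + 1 := by omega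
      have h3 : (i : ℤ) ≤ n := by omega
      nlinarith [mul_nonneg (by omega : (0:ℤ) ≤ 2 * i - n) (by omega : (0:ℤ) ≤ n + 1 - 2 * i),
        mul_nonneg (by omega : (0:ℤ) ≤ (i:ℤ)) (by omega : (0:ℤ) ≤ (n:ℤ) - i)]
  rw [key]
  have hN : ((n:ℝ)) = (n:ℝ) := rfl
  have hD : (0:ℝ) ≤ 5 * (n:ℝ) ^ 2 + 20 * (n:ℝ) + 24 := by positivity
  have hs : Real.sqrt (5 * (n:ℝ) ^ 2 + 20 * (n:ℝ) + 24) ^ 2 = 5 * (n:ℝ) ^ 2 + 20 * (n:ℝ) + 24 :=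
    Real.sq_sqrt hD
  have hs0 : 0 ≤ Real.sqrt (5 * (n:ℝ) ^ 2 + 20 * (n:ℝ) + 24) := Real.sqrt_nonneg _
  have hN1 : (1:ℝ) ≤ (n:ℝ) := by exact_mod_cast hn
  have hxN : 2 * (i:ℝ) ≤ (n:ℝ) + 1 := by exact_mod_cast hi2
  set s := Real.sqrt (5 * (n:ℝ) ^ 2 + 20 * (n:ℝ) + 24) with hsdef
  have quad : (n ^ 2 + 5 * i ^ 2 ≤ 5 * n * i + 2 * i + 1) ↔
      (n:ℝ) ^ 2 + 5 * (i:ℝ) ^ 2 ≤ 5 * (n:ℝ) * (i:ℝ) + 2 * (i:ℝ) + 1 := by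
    constructor <;> intro hh <;> exact_mod_cast hh
  rw [quad]
  constructor
  · intro hq
    rw [div_le_iff₀ (by norm_num : (0:ℝ) < 10)]
    -- need 5N+2 - s ≤ 10 x, i.e. -s ≤ 10x - 5N - 2 =: t, with t^2 ≤ s^2
    nlinarith [sq_nonneg (s + (10 * (i:ℝ) - 5 * (n:ℝ) - 2)), hs, hs0, hq]
  · intro hq
    rw [div_le_iff₀ (by norm_num : (0:ℝ) < 10)] at hq
    -- t := 10x - 5N - 2 ≥ -s, t ≤ 3 ≤ s, so t^2 ≤ s^2 → quadratic
    have ht3 : 10 * (i:ℝ) - 5 * (n:ℝ) - 2 ≤ 3 := by linarith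
    have hs3 : 3 ≤ s := by
      rw [hsdef]
      have : (9:ℝ) ≤ 5 * (n:ℝ) ^ 2 + 20 * (n:ℝ) + 24 := by nlinarith
      nlinarith [Real.sq_sqrt hD, Real.sqrt_nonneg (5 * (n:ℝ) ^ 2 + 20 * (n:ℝ) + 24)]
    nlinarith [mul_nonneg (by linarith : (0:ℝ) ≤ s + (10 * (i:ℝ) - 5 * (n:ℝ) - 2))
        (by linarith : (0:ℝ) ≤ s - (10 * (i:ℝ) - 5 * (n:ℝ) - 2)), hs]
end

section
/- Define λ_n = ⌈(5n+2 - √(5n²+20n+24))/10⌉ for n ≥ 1. Then for all n ≥ 1: λ_{n+3} - 1 ≤ λ_n ≤ λ_{n+4} - 1. -/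
noncomputable def lam (n : ℕ) : ℤ :=
  ⌈((5 * (n : ℝ) + 2) - Real.sqrt (5 * (n : ℝ) ^ 2 + 20 * (n : ℝ) + 24)) / 10⌉

theorem stmt5 (n : ℕ) (hn : 1 ≤ n) :
    lam (n + 3) - 1 ≤ lam n ∧ lam n ≤ lam (n + 4) - 1 := by
  set x : ℝ := (n : ℝ) with hx
  have hx0 : (0:ℝ) ≤ x := Nat.cast_nonneg n
  set s : ℝ := Real.sqrt (5 * x ^ 2 + 20 * x + 24) with hs
  have harg : (0:ℝ) ≤ 5 * x ^ 2 + 20 * x + 24 := by positivity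
  have hsq : s ^ 2 = 5 * x ^ 2 + 20 * x + 24 := Real.sq_sqrt harg
  have hs0 : 0 ≤ s := Real.sqrt_nonneg _
  -- upper bound: s ≤ 3x+8
  have hub : s ≤ 3 * x + 8 := by
    rw [hs, show (3 * x + 8) = Real.sqrt ((3 * x + 8) ^ 2) from
      (Real.sqrt_sq (by positivity)).symm]
    apply Real.sqrt_le_sqrt; nlinarith
  -- lower bound: 2x+3 ≤ s
  have hlb : 2 * x + 3 ≤ s := by
    rw [hs, show (2 * x + 3) = Real.sqrt ((2 * x + 3) ^ 2) from
      (Real.sqrt_sq (by positivity)).symm]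
    apply Real.sqrt_le_sqrt; nlinarith
  -- sqrt at n+3
  have h3 : s + 5 ≤ Real.sqrt (5 * (x + 3) ^ 2 + 20 * (x + 3) + 24) := by
    rw [show s + 5 = Real.sqrt ((s + 5) ^ 2) from (Real.sqrt_sq (by linarith)).symm]
    apply Real.sqrt_le_sqrt; nlinarith
  -- sqrt at n+4
  have h4 : Real.sqrt (5 * (x + 4) ^ 2 + 20 * (x + 4) + 24) ≤ s + 10 := by
    rw [show s + 10 = Real.sqrt ((s + 10) ^ 2) from (Real.sqrt_sq (by linarith)).symm]
    apply Real.sqrt_le_sqrt; nlinarith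
  constructor
  · have key : ((5 * ((n:ℝ) + 3) + 2) - Real.sqrt (5 * ((n:ℝ) + 3) ^ 2 + 20 * ((n:ℝ) + 3) + 24)) / 10
        ≤ ((5 * (n : ℝ) + 2) - s) / 10 + 1 := by
      rw [← hx]
      have := h3
      linarith
    have hc : lam (n + 3) ≤ lam n + 1 := by
      unfold lam
      push_cast
      calc ⌈((5 * ((n:ℝ) + 3) + 2) - Real.sqrt (5 * ((n:ℝ) + 3) ^ 2 + 20 * ((n:ℝ) + 3) + 24)) / 10⌉
          ≤ ⌈((5 * (n : ℝ) + 2) - s) / 10 + 1⌉ := Int.ceil_le_ceil key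
        _ = ⌈((5 * (n : ℝ) + 2) - Real.sqrt (5 * (n:ℝ) ^ 2 + 20 * (n:ℝ) + 24)) / 10⌉ + 1 := by
            rw [Int.ceil_add_one, hs, hx]
    omega
  · have key : ((5 * (n : ℝ) + 2) - s) / 10 + 1
        ≤ ((5 * ((n:ℝ) + 4) + 2) - Real.sqrt (5 * ((n:ℝ) + 4) ^ 2 + 20 * ((n:ℝ) + 4) + 24)) / 10 := by
      rw [← hx]
      linarith
    have hc : lam n + 1 ≤ lam (n + 4) := by
      unfold lam
      push_cast
      calc ⌈((5 * (n : ℝ) + 2) - Real.sqrt (5 * (n:ℝ) ^ 2 + 20 * (n:ℝ) + 24)) / 10⌉ + 1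
          = ⌈((5 * (n : ℝ) + 2) - s) / 10 + 1⌉ := by rw [Int.ceil_add_one, hs, hx]
        _ ≤ ⌈((5 * ((n:ℝ) + 4) + 2) - Real.sqrt (5 * ((n:ℝ) + 4) ^ 2 + 20 * ((n:ℝ) + 4) + 24)) / 10⌉ :=
            Int.ceil_le_ceil key
    omega
end

section
/- Define λ_n = ⌈(5n+2 - √(5n²+20n+24))/10⌉ for n ≥ 1. Then for all n ≥ 1: λ_{n+11} ≥ λ_n + 3. -/
theorem stmt6 (n : ℕ) (hn : 1 ≤ n) : lam n + 3 ≤ lam (n + 11) := by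
  unfold lam
  have hA : (0:ℝ) ≤ 5 * (n : ℝ) ^ 2 + 20 * (n : ℝ) + 24 := by positivity
  set x := Real.sqrt (5 * (n : ℝ) ^ 2 + 20 * (n : ℝ) + 24) with hx
  have hx0 : 0 ≤ x := Real.sqrt_nonneg _
  have hx2 : x ^ 2 = 5 * (n : ℝ) ^ 2 + 20 * (n : ℝ) + 24 := Real.sq_sqrt hA
  have hxl : (11 * (n : ℝ) + 20) / 5 ≤ x := by
    nlinarith [hx2, hx0, sq_nonneg (x - (11 * (n : ℝ) + 20) / 5), sq_nonneg ((n:ℝ)),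
      (by exact_mod_cast hn : (1:ℝ) ≤ (n:ℝ))]
  have hc : ((n + 11 : ℕ) : ℝ) = (n : ℝ) + 11 := by push_cast; ring
  have hub : Real.sqrt (5 * ((n + 11 : ℕ) : ℝ) ^ 2 + 20 * ((n + 11 : ℕ) : ℝ) + 24)
      ≤ x + 25 := by
    rw [hc, Real.sqrt_le_iff]
    refine ⟨by nlinarith [hxl, hx2], by linarith⟩
  have key : ((5 * (n : ℝ) + 2) - x) / 10 + 3 ≤
      ((5 * ((n + 11 : ℕ) : ℝ) + 2) -
        Real.sqrt (5 * ((n + 11 : ℕ) : ℝ) ^ 2 + 20 * ((n + 11 : ℕ) : ℝ) + 24)) / 10 := by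
    rw [hc]
    rw [hc] at hub
    linarith
  calc ⌈((5 * (n : ℝ) + 2) - x) / 10⌉ + 3
      = ⌈((5 * (n : ℝ) + 2) - x) / 10 + (3 : ℤ)⌉ := by
        rw [Int.ceil_add_intCast]
    _ ≤ _ := Int.ceil_le_ceil (by push_cast at key ⊢; linarith)
end

section
/- For integers n ≥ 3 and 1 ≤ i ≤ ⌈n/2⌉ - 1, the inequality (n/i)·binomial(n-i-1, i-1) ≥ (n/(i+1))·binomial(n-i-2, i) holds if and only if (5n-4 - √(5n²-4))/10 ≤ i. -/
set_option maxHeartbeats 800000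

lemma aux_id (m j : ℕ) (hjm : j ≤ m) :
    (((m+1).choose j : ℝ)) * ((m:ℝ)+1-(j:ℝ)) * ((m:ℝ)-(j:ℝ)) =
      ((m.choose (j+1) : ℝ)) * ((j:ℝ)+1) * ((m:ℝ)+1) := by
  have h1 := Nat.choose_succ_right_eq (m+1) j
  have h2 := Nat.choose_succ_right_eq (m+1) (j+1)
  have h3 := Nat.add_one_mul_choose_eq m (j+1)
  have c1 := congrArg (Nat.cast : ℕ → ℝ) h1
  have c2 := congrArg (Nat.cast : ℕ → ℝ) h2
  have c3 := congrArg (Nat.cast : ℕ → ℝ) h3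
  push_cast [Nat.cast_sub (show j ≤ m+1 by omega)] at c1
  push_cast [Nat.cast_sub hjm] at c2
  push_cast at c3
  linear_combination (-( (m:ℝ)-(j:ℝ))) * c1 - ((j:ℝ)+1)*c2 - ((j:ℝ)+1)*c3

theorem stmt9 (n i : ℕ) (hn : 3 ≤ n) (hi1 : 1 ≤ i) (hi2 : i ≤ (n + 1) / 2 - 1) :
    (n : ℝ) / (i + 1) * ((n - i - 2).choose i) ≤ (n : ℝ) / i * ((n - i - 1).choose (i - 1)) ↔
      (5 * (n : ℝ) - 4 - Real.sqrt (5 * (n : ℝ) ^ 2 - 4)) / 10 ≤ (i : ℝ) := by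
  have h2i : 2*i + 1 ≤ n := by omega
  obtain ⟨j, rfl⟩ : ∃ j, i = j + 1 := ⟨i - 1, by omega⟩
  obtain ⟨m, rfl⟩ : ∃ m, n = m + j + 3 := ⟨n - j - 3, by omega⟩
  have hjm : j ≤ m := by omega
  simp only [show m + j + 3 - (j+1) - 2 = m from by omega,
             show m + j + 3 - (j+1) - 1 = m + 1 from by omega,
             show j + 1 - 1 = j from by omega]
  push_cast
  have hA : (0:ℝ) < (((m+1).choose j : ℕ) : ℝ) := by
    exact_mod_cast Nat.choose_pos (show j ≤ m+1 by omega)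
  have hB : (0:ℝ) ≤ ((m.choose (j+1) : ℕ) : ℝ) := Nat.cast_nonneg _
  have hmx : (j:ℝ) ≤ (m:ℝ) := by exact_mod_cast hjm
  have hx0 : (0:ℝ) ≤ (j:ℝ) := Nat.cast_nonneg j
  have hm0 : (0:ℝ) ≤ (m:ℝ) := Nat.cast_nonneg m
  have hid := aux_id m j hjm
  have harg : (0:ℝ) ≤ 5 * ((m:ℝ) + (j:ℝ) + 3) ^ 2 - 4 := by nlinarith
  have hs0 : 0 ≤ Real.sqrt (5 * ((m:ℝ) + (j:ℝ) + 3) ^ 2 - 4) := Real.sqrt_nonneg _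
  have hs : (Real.sqrt (5 * ((m:ℝ) + (j:ℝ) + 3) ^ 2 - 4)) ^ 2
      = 5 * ((m:ℝ) + (j:ℝ) + 3) ^ 2 - 4 := Real.sq_sqrt harg
  set s := Real.sqrt (5 * ((m:ℝ) + (j:ℝ) + 3) ^ 2 - 4) with hsdef
  set A := (((m+1).choose j : ℕ) : ℝ) with hAdef
  set B := ((m.choose (j+1) : ℕ) : ℝ) with hBdef
  set x := (j:ℝ) with hxdef
  have hN : (0:ℝ) < (m:ℝ) + x + 3 := by positivity
  rw [div_mul_eq_mul_div, div_mul_eq_mul_div,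
      div_le_div_iff₀ (by positivity) (by positivity),
      div_le_iff₀ (by norm_num : (0:ℝ) < 10)]
  constructor
  · intro h
    have h1 : B * (x+1) ≤ A * (x+2) := by nlinarith [h, hN]
    have h3 : A * (((m:ℝ)+1-x) * ((m:ℝ)-x)) ≤ A * ((x+2) * ((m:ℝ)+1)) := by
      nlinarith [mul_le_mul_of_nonneg_right h1 (show (0:ℝ) ≤ (m:ℝ)+1 by positivity), hid]
    have hP : ((m:ℝ)+1-x) * ((m:ℝ)-x) ≤ (x+2) * ((m:ℝ)+1) := le_of_mul_le_mul_left h3 hA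
    have ht1 : (5 * ((m:ℝ)+x+3) - 4 - 10 * (x+1)) ^ 2 ≤ s ^ 2 := by nlinarith [hP, hs]
    nlinarith [ht1, hs0]
  · intro h
    have hts : 5 * ((m:ℝ)+x+3) - 4 - 10 * (x+1) ≤ s := by linarith
    have ht0 : (0:ℝ) ≤ 5 * ((m:ℝ)+x+3) - 4 - 10 * (x+1) := by linarith
    have ht2 : (5 * ((m:ℝ)+x+3) - 4 - 10 * (x+1)) * (5 * ((m:ℝ)+x+3) - 4 - 10 * (x+1)) ≤ s * s :=
      mul_self_le_mul_self ht0 hts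
    have hP : ((m:ℝ)+1-x) * ((m:ℝ)-x) ≤ (x+2) * ((m:ℝ)+1) := by nlinarith [ht2, hs]
    have h3 : A * (((m:ℝ)+1-x) * ((m:ℝ)-x)) ≤ A * ((x+2) * ((m:ℝ)+1)) :=
      mul_le_mul_of_nonneg_left hP hA.le
    have h1 : B * (x+1) ≤ A * (x+2) := by nlinarith [h3, hid, hN]
    nlinarith [mul_le_mul_of_nonneg_left h1 hN.le]
end

section
/- Define λ_n = ⌈(5n+2 - √(5n²+20n+24))/10⌉ and ρ_n = ⌈(5n-4 - √(5n²-4))/10⌉. Then for all n ≥ 5: λ_{n-1} ≤ ρ_n ≤ λ_{n-4} + 1 ≤ λ_n. -/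
noncomputable def rho (n : ℕ) : ℤ :=
  ⌈((5 * (n : ℝ) - 4) - Real.sqrt (5 * (n : ℝ) ^ 2 - 4)) / 10⌉

noncomputable def lamReal (x : ℝ) : ℝ :=
  ((5 * x + 2) - Real.sqrt (5 * x ^ 2 + 20 * x + 24)) / 10

noncomputable def rhoReal (x : ℝ) : ℝ :=
  ((5 * x - 4) - Real.sqrt (5 * x ^ 2 - 4)) / 10

theorem lam_eq_ceil_lamReal (n : ℕ) : lam n = ⌈lamReal n⌉ := rfl

theorem rho_eq_ceil_rhoReal (n : ℕ) : rho n = ⌈rhoReal n⌉ := rfl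

theorem lamReal_sub_one_le_rhoReal {x : ℝ} (hx : 1 ≤ x) : lamReal (x - 1) ≤ rhoReal x := by
  have hB : Real.sqrt (5 * x ^ 2 - 4) ≤ 5 * x + 6 :=
    (Real.sqrt_le_left (by linarith)).2 (by nlinarith)
  have hA : 1 + Real.sqrt (5 * x ^ 2 - 4) ≤ Real.sqrt (5 * x ^ 2 + 10 * x + 9) := by
    rw [Real.le_sqrt' (by positivity), add_sq, Real.sq_sqrt (by nlinarith)]
    linarith
  unfold lamReal rhoReal
  have e : 5 * (x - 1) ^ 2 + 20 * (x - 1) + 24 = 5 * x ^ 2 + 10 * x + 9 := by ring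
  rw [e]
  linarith

theorem rhoReal_le_lamReal_sub_four_add_one {x : ℝ} (hx : 5 ≤ x) :
    rhoReal x ≤ lamReal (x - 4) + 1 := by
  have hC : Real.sqrt (5 * x ^ 2 - 20 * x + 24) ≤ (5 * x - 11) / 2 :=
    (Real.sqrt_le_left (by linarith)).2 (by nlinarith)
  have hB : 4 + Real.sqrt (5 * x ^ 2 - 20 * x + 24) ≤ Real.sqrt (5 * x ^ 2 - 4) := by
    rw [Real.le_sqrt' (by positivity), add_sq, Real.sq_sqrt (by nlinarith)]
    linarith
  unfold lamReal rhoReal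
  have e : 5 * (x - 4) ^ 2 + 20 * (x - 4) + 24 = 5 * x ^ 2 - 20 * x + 24 := by ring
  rw [e]
  linarith

theorem lamReal_sub_four_add_one_le_lamReal {x : ℝ} (hx : 5 / 2 ≤ x) :
    lamReal (x - 4) + 1 ≤ lamReal x := by
  have hC : 2 * x - 5 ≤ Real.sqrt (5 * x ^ 2 - 20 * x + 24) :=
    Real.le_sqrt_of_sq_le (by nlinarith)
  have hD : Real.sqrt (5 * x ^ 2 + 20 * x + 24) ≤ 10 + Real.sqrt (5 * x ^ 2 - 20 * x + 24) := by
    rw [Real.sqrt_le_left (by positivity), add_sq, Real.sq_sqrt (by nlinarith)]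
    linarith
  unfold lamReal
  have e : 5 * (x - 4) ^ 2 + 20 * (x - 4) + 24 = 5 * x ^ 2 - 20 * x + 24 := by ring
  rw [e]
  linarith

theorem stmt10 (n : ℕ) (hn : 5 ≤ n) :
    lam (n - 1) ≤ rho n ∧ rho n ≤ lam (n - 4) + 1 ∧ lam (n - 4) + 1 ≤ lam n := by
  have hx : (5 : ℝ) ≤ n := by exact_mod_cast hn
  have h1 : ((n - 1 : ℕ) : ℝ) = n - 1 := by push_cast [Nat.cast_sub (by omega : 1 ≤ n)]; rfl
  have h4 : ((n - 4 : ℕ) : ℝ) = n - 4 := by push_cast [Nat.cast_sub (by omega : 4 ≤ n)]; rfl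
  simp only [lam_eq_ceil_lamReal, rho_eq_ceil_rhoReal, h1, h4, ← Int.ceil_add_one]
  exact ⟨Int.ceil_mono (lamReal_sub_one_le_rhoReal (by linarith)),
    Int.ceil_mono (rhoReal_le_lamReal_sub_four_add_one hx),
    Int.ceil_mono (lamReal_sub_four_add_one_le_lamReal (by linarith))⟩
end

section
/- For n ≥ 5, the independence polynomial of the graph CE_n (the cycle C_n with the additional chord {n-2, n}) satisfies I(CE_n; t) = I(P_{n-1}; t) + t·I(P_{n-4}; t), and its coefficient of t^i equals binomial(n-i, i) + binomial(n-i-2, i-1) for 0 ≤ i ≤ ⌊n/2⌋. -/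
open Finset Polynomial

noncomputable def indepCount {V : Type*} [Fintype V] (G : SimpleGraph V) (k : ℕ) : ℕ :=
  Set.ncard {s : Finset V | s.card = k ∧ ∀ v ∈ s, ∀ w ∈ s, ¬ G.Adj v w}

def pathG (n : ℕ) : SimpleGraph (Fin n) :=
  SimpleGraph.fromRel (fun a b => (a : ℕ) + 1 = (b : ℕ))

def ceG (n : ℕ) : SimpleGraph (Fin n) :=
  SimpleGraph.fromRel (fun a b => (a : ℕ) + 1 = (b : ℕ) ∨ ((a : ℕ) = n - 1 ∧ (b : ℕ) = 0)
    ∨ ((a : ℕ) = n - 3 ∧ (b : ℕ) = n - 1))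

noncomputable def indepPoly {V : Type*} [Fintype V] (G : SimpleGraph V) : Polynomial ℤ :=
  ∑ k ∈ Finset.range (Fintype.card V + 1), Polynomial.C (indepCount G k : ℤ) * Polynomial.X ^ k

/-!
Split the independent sets of `CE_n` according to whether they contain the vertex `n`, whose
neighbours are `1`, `n - 2` and `n - 1`. Those avoiding it are the independent sets of the path
`1, …, n - 1`; those containing it are `{n}` together with an independent set of the path
`2, …, n - 3`, a copy of `P_{n-4}`. This gives the polynomial identity. The independent `k`-sets of
`P_m` are the `k`-subsets of `{0, …, m - 1}` without two consecutive elements; splitting on the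
largest element shows that their number `S(m, k)` satisfies `S(m+2, k+1) = S(m+1, k+1) + S(m, k)`,
the Pascal recursion of `C(m + 1 - k, k)`.
-/

lemma indepCount_zero {V : Type*} [Fintype V] (G : SimpleGraph V) : indepCount G 0 = 1 := by
  rw [indepCount, ← Set.ncard_singleton (∅ : Finset V)]
  congr 1
  ext s
  simp +contextual [Finset.card_eq_zero]

lemma indepCount_eq_zero_of_card_lt {V : Type*} [Fintype V] (G : SimpleGraph V) {k : ℕ}
    (h : Fintype.card V < k) : indepCount G k = 0 := by
  rw [indepCount, Set.ncard_eq_zero]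
  exact Set.eq_empty_of_forall_notMem fun s hs => (card_le_univ s).not_gt (hs.1 ▸ h)

lemma coeff_indepPoly {V : Type*} [Fintype V] (G : SimpleGraph V) (i : ℕ) :
    (indepPoly G).coeff i = indepCount G i := by
  rw [indepPoly, finsetSum_coeff]
  simp only [coeff_C_mul_X_pow]
  rw [sum_ite_eq, ite_eq_left_iff, mem_range, not_lt]
  intro h
  rw [indepCount_eq_zero_of_card_lt G (by omega), Nat.cast_zero]

lemma indepCount_fromRel_val (R : ℕ → ℕ → Prop) [DecidableRel R] (hR : ∀ x, ¬R x x)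
    (n k : ℕ) :
    indepCount (SimpleGraph.fromRel fun a b : Fin n => R a b) k =
      #{t ∈ powersetCard k (range n) | ∀ x ∈ t, ∀ y ∈ t, ¬R x y} := by
  have hindep : ∀ s : Finset (Fin n),
      (∀ v ∈ s, ∀ w ∈ s, ¬(SimpleGraph.fromRel fun a b : Fin n => R a b).Adj v w) ↔
        ∀ v ∈ s, ∀ w ∈ s, ¬R v w := by
    refine fun s => ⟨fun h v hv w hw hvw => ?_, fun h v hv w hw hvw => ?_⟩
    · exact h v hv w hw ⟨fun e => hR v (e ▸ hvw), Or.inl hvw⟩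
    · obtain ⟨-, hvw | hwv⟩ := hvw
      exacts [h v hv w hw hvw, h w hw v hv hwv]
  rw [← Nat.Iio_eq_range, ← Fin.map_valEmbedding_univ, powersetCard_map, filter_map, card_map,
    indepCount, ← Set.ncard_coe_finset]
  congr 1
  ext s
  simp only [Set.mem_ofPred_eq, coe_filter, mem_powersetCard_univ, hindep, Function.comp_apply,
    RelEmbedding.coe_toEmbedding, mapEmbedding_apply, forall_mem_map, Fin.valEmbedding_apply]

section SplitRange

variable (P : Finset ℕ → Prop) [DecidablePred P] (m k : ℕ)

lemma card_filter_powersetCard_range_add_one :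
    #{t ∈ powersetCard (k + 1) (range (m + 1)) | P t} =
      #{t ∈ powersetCard (k + 1) (range m) | P t} +
        #{u ∈ powersetCard k (range m) | P (insert m u)} := by
  have hm : m ∉ range m := notMem_range_self
  rw [range_add_one, powersetCard_succ_insert hm, filter_union, filter_image,
    card_union_of_disjoint, card_image_of_injOn]
  · intro u hu v hv huv
    simp only [coe_filter, mem_powersetCard, Set.mem_ofPred_eq] at hu hv
    rw [← erase_insert (fun h => hm (hu.1.1 h)), huv, erase_insert (fun h => hm (hv.1.1 h))]
  · refine disjoint_left.2 fun t ht ht' => ?_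
    obtain ⟨u, -, rfl⟩ := mem_image.1 ht'
    exact hm ((mem_powersetCard.1 (mem_filter.1 ht).1).1 (mem_insert_self m u))

lemma filter_powersetCard_range_add_one_notMem :
    {t ∈ powersetCard k (range (m + 1)) | P t ∧ m ∉ t} = {t ∈ powersetCard k (range m) | P t} := by
  ext t
  simp only [mem_filter, mem_powersetCard]
  constructor
  · rintro ⟨⟨ht, hk⟩, hP, hm⟩
    exact ⟨⟨(subset_insert_iff_of_notMem hm).1 (range_add_one ▸ ht), hk⟩, hP⟩
  · rintro ⟨⟨ht, hk⟩, hP⟩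
    exact ⟨⟨ht.trans (range_subset_range.2 m.le_succ), hk⟩, hP, fun h => notMem_range_self (ht h)⟩

lemma card_filter_powersetCard_range_add_one_zero_notMem :
    #{t ∈ powersetCard k (range (m + 1)) | P t ∧ 0 ∉ t} =
      #{t ∈ powersetCard k (range m) | P (t.map (addRightEmbedding 1))} := by
  have hrange : range (m + 1) = insert 0 ((range m).map (addRightEmbedding 1)) := range_add_one' m
  have h0 : 0 ∉ (range m).map (addRightEmbedding 1) := by simp
  have hshift : {t ∈ powersetCard k (range (m + 1)) | P t ∧ 0 ∉ t} =
      {t ∈ powersetCard k ((range m).map (addRightEmbedding 1)) | P t} := by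
    ext t
    simp only [mem_filter, mem_powersetCard, hrange]
    constructor
    · rintro ⟨⟨ht, hk⟩, hP, h0t⟩
      exact ⟨⟨(subset_insert_iff_of_notMem h0t).1 ht, hk⟩, hP⟩
    · rintro ⟨⟨ht, hk⟩, hP⟩
      exact ⟨⟨ht.trans (subset_insert _ _), hk⟩, hP, fun h => h0 (ht h)⟩
  rw [hshift, powersetCard_map, filter_map, card_map]
  rfl

end SplitRange

def IsSparse (t : Finset ℕ) : Prop := ∀ x ∈ t, ∀ y ∈ t, x + 1 ≠ y

instance : DecidablePred IsSparse := fun t => inferInstanceAs (Decidable (∀ x ∈ t, ∀ y ∈ t, _))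

lemma isSparse_map_add_one (t : Finset ℕ) :
    IsSparse (t.map (addRightEmbedding 1)) ↔ IsSparse t := by
  simp [IsSparse]

lemma isSparse_insert_add_one {a : ℕ} {u : Finset ℕ} (hu : ∀ x ∈ u, x ≤ a) :
    IsSparse (insert (a + 1) u) ↔ IsSparse u ∧ a ∉ u := by
  simp only [IsSparse, forall_mem_insert]
  constructor
  · rintro ⟨-, h⟩
    exact ⟨fun x hx => (h x hx).2, fun ha => (h a ha).1 rfl⟩
  · rintro ⟨hs, ha⟩
    refine ⟨⟨by omega, fun y hy => by have := hu y hy; omega⟩, fun x hx => ⟨?_, hs x hx⟩⟩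
    intro hxa
    exact ha (Nat.succ_injective hxa ▸ hx)

def sparseCount (m k : ℕ) : ℕ := #{t ∈ powersetCard k (range m) | IsSparse t}

lemma sparseCount_zero_right (m : ℕ) : sparseCount m 0 = 1 := by
  simp [sparseCount, powersetCard_zero, filter_singleton, IsSparse]

lemma sparseCount_of_lt {m k : ℕ} (h : m < k) : sparseCount m k = 0 := by
  rw [sparseCount, powersetCard_eq_empty.2 (by simpa using h), filter_empty, card_empty]

lemma sparseCount_one_one : sparseCount 1 1 = 1 := by
  decide

lemma sparseCount_add_two_add_one (m k : ℕ) :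
    sparseCount (m + 2) (k + 1) = sparseCount (m + 1) (k + 1) + sparseCount m k := by
  rw [sparseCount, card_filter_powersetCard_range_add_one]
  congr 1
  rw [sparseCount, ← filter_powersetCard_range_add_one_notMem _ m]
  congr 1
  refine filter_congr fun u hu => isSparse_insert_add_one fun x hx => ?_
  exact Nat.lt_succ_iff.1 (mem_range.1 ((mem_powersetCard.1 hu).1 hx))

theorem sparseCount_eq_choose (m k : ℕ) : sparseCount m k = (m + 1 - k).choose k := by
  induction m using Nat.strong_induction_on generalizing k with
  | _ m ih =>
    match m, k with
    | m, 0 => simp [sparseCount_zero_right]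
    | 0, k + 1 => simp [sparseCount_of_lt]
    | 1, 1 => simp [sparseCount_one_one]
    | 1, k + 2 => simp [sparseCount_of_lt]
    | m + 2, k + 1 =>
      rw [sparseCount_add_two_add_one, ih (m + 1) (by omega), ih m (by omega)]
      rcases Nat.lt_or_ge (m + 1) k with h | h
      · rw [Nat.choose_eq_zero_of_lt (by omega), Nat.choose_eq_zero_of_lt (by omega),
          Nat.choose_eq_zero_of_lt (by omega)]
      · rw [show m + 2 + 1 - (k + 1) = m + 1 - k + 1 by omega,
          show m + 1 + 1 - (k + 1) = m + 1 - k by omega, Nat.choose_succ_succ, add_comm]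

lemma indepCount_pathG (m k : ℕ) : indepCount (pathG m) k = sparseCount m k :=
  indepCount_fromRel_val (fun x y => x + 1 = y) (fun x => x.succ_ne_self) m k

-- The edges of `ceG (m + 4)`, with `n = m + 4` so that no truncated subtraction occurs.
def ceRel (m x y : ℕ) : Prop := x + 1 = y ∨ (x = m + 3 ∧ y = 0) ∨ (x = m + 1 ∧ y = m + 3)

instance (m : ℕ) : DecidableRel (ceRel m) := fun _ _ => inferInstanceAs (Decidable (_ ∨ _ ∨ _))

lemma forall_not_ceRel_iff_isSparse {m : ℕ} {t : Finset ℕ} (ht : ∀ x ∈ t, x < m + 3) :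
    (∀ x ∈ t, ∀ y ∈ t, ¬ceRel m x y) ↔ IsSparse t := by
  unfold ceRel IsSparse
  grind

lemma forall_not_ceRel_insert_iff {m : ℕ} {u : Finset ℕ} (hu : ∀ x ∈ u, x < m + 3) :
    (∀ x ∈ insert (m + 3) u, ∀ y ∈ insert (m + 3) u, ¬ceRel m x y) ↔
      ((IsSparse u ∧ 0 ∉ u) ∧ m + 1 ∉ u) ∧ m + 2 ∉ u := by
  have hfrom : (∀ y ∈ u, ¬ceRel m (m + 3) y) ↔ 0 ∉ u := by
    unfold ceRel; grind
  have hto : (∀ x ∈ u, ¬ceRel m x (m + 3)) ↔ m + 1 ∉ u ∧ m + 2 ∉ u := by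
    unfold ceRel; grind
  have hself : ¬ceRel m (m + 3) (m + 3) := by unfold ceRel; omega
  rw [← forall_not_ceRel_iff_isSparse hu]
  grind

lemma indepCount_ceG_add_four (m k : ℕ) :
    indepCount (ceG (m + 4)) (k + 1) = sparseCount (m + 3) (k + 1) + sparseCount m k := by
  have hirrefl : ∀ x, ¬ceRel m x x := by unfold ceRel; omega
  have hbound : ∀ {j : ℕ} {t : Finset ℕ}, t ∈ powersetCard j (range (m + 3)) → ∀ x ∈ t, x < m + 3 :=
    fun ht x hx => mem_range.1 ((mem_powersetCard.1 ht).1 hx)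
  rw [show ceG (m + 4) = SimpleGraph.fromRel fun a b : Fin (m + 4) => ceRel m a b from rfl,
    indepCount_fromRel_val _ hirrefl, card_filter_powersetCard_range_add_one]
  congr 1
  · exact congrArg card (filter_congr fun t ht => forall_not_ceRel_iff_isSparse (hbound ht))
  · rw [filter_congr fun u hu => forall_not_ceRel_insert_iff (hbound hu),
      filter_powersetCard_range_add_one_notMem, filter_powersetCard_range_add_one_notMem,
      card_filter_powersetCard_range_add_one_zero_notMem, sparseCount]
    exact congrArg card (filter_congr fun u _ => isSparse_map_add_one u)

theorem stmt11 (n : ℕ) (hn : 5 ≤ n) :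
    indepPoly (ceG n) = indepPoly (pathG (n - 1)) + Polynomial.X * indepPoly (pathG (n - 4)) ∧
    ∀ i ≤ n / 2, indepCount (ceG n) i =
      (n - i).choose i + (if 1 ≤ i then (n - i - 2).choose (i - 1) else 0) := by
  obtain ⟨m, rfl⟩ : ∃ m, n = m + 4 := ⟨n - 4, by omega⟩
  refine ⟨?_, fun i _ => ?_⟩
  · ext (_ | k)
    · simp [coeff_indepPoly, indepCount_zero]
    · simp [coeff_indepPoly, coeff_X_mul, indepCount_pathG, indepCount_ceG_add_four]
  · rcases i with _ | k
    · simp [indepCount_zero]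
    · rw [indepCount_ceG_add_four, sparseCount_eq_choose, sparseCount_eq_choose,
        if_pos (Nat.le_add_left 1 k), show m + 3 + 1 - (k + 1) = m + 4 - (k + 1) by omega,
        show m + 1 - k = m + 4 - (k + 1) - 2 by omega, Nat.add_sub_cancel]
end

section
/- Set s_i = binomial(n-i, i) + binomial(n-i-2, i-1) for 0 ≤ i ≤ ⌊n/2⌋ (the coefficients of the independence polynomial of CE_n), and let λ_m = ⌈(5m+2 - √(5m²+20m+24))/10⌉. Then for n ≥ 5: s_{i-1} < s_i for all 1 ≤ i ≤ λ_{n-1}, and s_i ≥ s_{i+1} for all λ_{n-4}+1 ≤ i ≤ ⌊n/2⌋. In particular, the mode χ_n of this sequence satisfies λ_{n-1} ≤ χ_n ≤ λ_{n-4} + 1. -/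
lemma sqrt1_facts (n : ℕ) (hn : 5 ≤ n) :
    (Real.sqrt (5*(n:ℝ)^2+10*(n:ℝ)+9))^2 = 5*(n:ℝ)^2+10*(n:ℝ)+9 ∧
    2*(n:ℝ)+1 ≤ Real.sqrt (5*(n:ℝ)^2+10*(n:ℝ)+9) := by
  have hn5 : (5:ℝ) ≤ n := by exact_mod_cast hn
  constructor
  · exact Real.sq_sqrt (by positivity)
  · calc 2*(n:ℝ)+1 = Real.sqrt ((2*(n:ℝ)+1)^2) := (Real.sqrt_sq (by positivity)).symm
      _ ≤ _ := Real.sqrt_le_sqrt (by nlinarith)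

lemma sqrt2_facts (n : ℕ) (hn : 5 ≤ n) :
    (Real.sqrt (5*(n:ℝ)^2-20*(n:ℝ)+24))^2 = 5*(n:ℝ)^2-20*(n:ℝ)+24 ∧
    Real.sqrt (5*(n:ℝ)^2-20*(n:ℝ)+24) ≤ 3*(n:ℝ)-4 ∧
    3 ≤ Real.sqrt (5*(n:ℝ)^2-20*(n:ℝ)+24) := by
  have hn5 : (5:ℝ) ≤ n := by exact_mod_cast hn
  refine ⟨Real.sq_sqrt (by nlinarith [sq_nonneg ((n:ℝ)-2)]), ?_, ?_⟩
  · calc Real.sqrt (5*(n:ℝ)^2-20*(n:ℝ)+24) ≤ Real.sqrt ((3*(n:ℝ)-4)^2) :=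
        Real.sqrt_le_sqrt (by nlinarith)
      _ = 3*(n:ℝ)-4 := Real.sqrt_sq (by linarith)
  · calc (3:ℝ) = Real.sqrt 9 := by rw [show (9:ℝ) = 3^2 by norm_num, Real.sqrt_sq]; norm_num
      _ ≤ _ := Real.sqrt_le_sqrt (by nlinarith)

lemma sqrt12 (n : ℕ) (hn : 5 ≤ n) :
    Real.sqrt (5*(n:ℝ)^2-20*(n:ℝ)+24) + 5 ≤ Real.sqrt (5*(n:ℝ)^2+10*(n:ℝ)+9) := by
  have hn5 : (5:ℝ) ≤ n := by exact_mod_cast hn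
  obtain ⟨h1, h1b⟩ := sqrt1_facts n hn
  obtain ⟨h2, h2b, -⟩ := sqrt2_facts n hn
  have hs2n : 0 ≤ Real.sqrt (5*(n:ℝ)^2-20*(n:ℝ)+24) := Real.sqrt_nonneg _
  have hs1n : 0 ≤ Real.sqrt (5*(n:ℝ)^2+10*(n:ℝ)+9) := Real.sqrt_nonneg _
  nlinarith [h1, h2, h2b, hs2n, hs1n]

lemma lam1 (n : ℕ) (hn : 5 ≤ n) (i : ℤ) (hle : i ≤ lam (n-1)) :
    0 < 5*i^2 - (5*(n:ℤ)+7)*i + (n:ℤ)^2+3*(n:ℤ)+2 ∧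
    0 < 5*i^2 - (5*(n:ℤ)+2)*i + (n:ℤ)^2+2*(n:ℤ)-1 := by
  have hn5 : (5:ℝ) ≤ n := by exact_mod_cast hn
  unfold lam at hle
  rw [show ((n-1:ℕ):ℝ) = (n:ℝ)-1 by
        rw [Nat.cast_sub (by omega)]; norm_num] at hle
  rw [show 5*((n:ℝ)-1)^2+20*((n:ℝ)-1)+24 = 5*(n:ℝ)^2+10*(n:ℝ)+9 from by ring] at hle
  obtain ⟨hs1sq, hs1b⟩ := sqrt1_facts n hn
  obtain ⟨hs2sq, hs2b, -⟩ := sqrt2_facts n hn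
  have hs12 := sqrt12 n hn
  set s1 := Real.sqrt (5*(n:ℝ)^2+10*(n:ℝ)+9) with hs1def
  set s2 := Real.sqrt (5*(n:ℝ)^2-20*(n:ℝ)+24) with hs2def
  have hs1n : 0 ≤ s1 := Real.sqrt_nonneg _
  have hs2n : 0 ≤ s2 := Real.sqrt_nonneg _
  have h1 : (i:ℝ) < (5*((n:ℝ)-1)+2 - s1)/10 + 1 := by
    have h0 : (i:ℝ) ≤ ((⌈(5*((n:ℝ)-1)+2 - s1)/10⌉ : ℤ) : ℝ) := by exact_mod_cast hle
    exact lt_of_le_of_lt h0 (Int.ceil_lt_add_one _)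
  have hG1 : s1 < 5*(n:ℝ)+7-10*(i:ℝ) := by linarith
  have hG2 : s2 < 5*(n:ℝ)+2-10*(i:ℝ) := by linarith
  constructor
  · have hc : 0 < (5*(n:ℝ)+7-10*(i:ℝ)) - s1 := by linarith
    have hc2 : 0 < (5*(n:ℝ)+7-10*(i:ℝ)) + s1 := by linarith
    have key : (0:ℝ) < 5*(i:ℝ)^2 - (5*(n:ℝ)+7)*(i:ℝ) + (n:ℝ)^2+3*(n:ℝ)+2 := by
      nlinarith [mul_pos hc hc2, hs1sq]
    exact_mod_cast key
  · have hc : 0 < (5*(n:ℝ)+2-10*(i:ℝ)) - s2 := by linarith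
    have hc2 : 0 < (5*(n:ℝ)+2-10*(i:ℝ)) + s2 := by linarith
    have key : (0:ℝ) < 5*(i:ℝ)^2 - (5*(n:ℝ)+2)*(i:ℝ) + (n:ℝ)^2+2*(n:ℝ)-1 := by
      nlinarith [mul_pos hc hc2, hs2sq]
    exact_mod_cast key

lemma lam_le_half (n : ℕ) (hn : 5 ≤ n) : lam (n-1) ≤ ((n/2:ℕ):ℤ) := by
  have hn5 : (5:ℝ) ≤ n := by exact_mod_cast hn
  unfold lam
  rw [show ((n-1:ℕ):ℝ) = (n:ℝ)-1 by rw [Nat.cast_sub (by omega)]; norm_num]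
  rw [show 5*((n:ℝ)-1)^2+20*((n:ℝ)-1)+24 = 5*(n:ℝ)^2+10*(n:ℝ)+9 from by ring]
  rw [Int.ceil_le]
  obtain ⟨-, hs1b⟩ := sqrt1_facts n hn
  have hhalf : (n:ℝ) ≤ 2*(((n/2:ℕ):ℤ):ℝ) + 1 := by
    exact_mod_cast (show n ≤ 2*(n/2) + 1 by omega)
  linarith

lemma lam_nonneg (n : ℕ) (hn : 5 ≤ n) : 0 ≤ lam (n-4) := by
  have hn5 : (5:ℝ) ≤ n := by exact_mod_cast hn
  unfold lam
  rw [show ((n-4:ℕ):ℝ) = (n:ℝ)-4 by rw [Nat.cast_sub (by omega)]; norm_num]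
  rw [show 5*((n:ℝ)-4)^2+20*((n:ℝ)-4)+24 = 5*(n:ℝ)^2-20*(n:ℝ)+24 from by ring]
  obtain ⟨-, hs2b, -⟩ := sqrt2_facts n hn
  have key : ((-1:ℤ):ℝ) < (5*((n:ℝ)-4)+2 - Real.sqrt (5*(n:ℝ)^2-20*(n:ℝ)+24))/10 := by
    push_cast
    linarith
  have := Int.lt_ceil.mpr key
  omega

lemma lam2 (n : ℕ) (hn : 5 ≤ n) (i : ℤ) (hlow : lam (n-4) + 1 ≤ i) (hup : 2*i ≤ (n:ℤ)) :
    5*i^2 - 5*(n:ℤ)*i + 3*i + (n:ℤ)^2 - 2*(n:ℤ) ≤ 0 ∧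
    5*i^2 + 8*i - 5*(n:ℤ)*i + (n:ℤ)^2 - 3*(n:ℤ) + 2 ≤ 0 := by
  have hn5 : (5:ℝ) ≤ n := by exact_mod_cast hn
  unfold lam at hlow
  rw [show ((n-4:ℕ):ℝ) = (n:ℝ)-4 by rw [Nat.cast_sub (by omega)]; norm_num] at hlow
  rw [show 5*((n:ℝ)-4)^2+20*((n:ℝ)-4)+24 = 5*(n:ℝ)^2-20*(n:ℝ)+24 from by ring] at hlow
  obtain ⟨hs1sq, hs1b⟩ := sqrt1_facts n hn
  obtain ⟨hs2sq, hs2b, hs2c⟩ := sqrt2_facts n hn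
  have hs12 := sqrt12 n hn
  set s1 := Real.sqrt (5*(n:ℝ)^2+10*(n:ℝ)+9) with hs1def
  set s2 := Real.sqrt (5*(n:ℝ)^2-20*(n:ℝ)+24) with hs2def
  have hs1n : 0 ≤ s1 := Real.sqrt_nonneg _
  have hs2n : 0 ≤ s2 := Real.sqrt_nonneg _
  have hceil : ⌈(5*((n:ℝ)-4)+2 - s2)/10⌉ ≤ i - 1 := by omega
  have hy : (5*((n:ℝ)-4)+2 - s2)/10 ≤ ((i-1:ℤ):ℝ) := Int.ceil_le.mp hceil
  push_cast at hy
  have hG3 : 5*(n:ℝ)-8-10*(i:ℝ) ≤ s2 := by linarith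
  have hupR : 2*(i:ℝ) ≤ (n:ℝ) := by exact_mod_cast hup
  constructor
  · -- L(i) ≤ 0
    have hlo : -s1 ≤ 10*(i:ℝ)-5*(n:ℝ)+3 := by linarith
    have hhi : 10*(i:ℝ)-5*(n:ℝ)+3 ≤ s1 := by nlinarith
    have hsq : (10*(i:ℝ)-5*(n:ℝ)+3)^2 ≤ s1^2 := sq_le_sq' hlo hhi
    have key : 5*(i:ℝ)^2 - 5*(n:ℝ)*(i:ℝ) + 3*(i:ℝ) + (n:ℝ)^2 - 2*(n:ℝ) ≤ 0 := by
      nlinarith [hsq, hs1sq]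
    exact_mod_cast key
  · -- B(i+1) ≤ 0
    have hU : 10*(i:ℝ)+8-5*(n:ℝ) ≤ s2 := by
      by_cases hpar : 2*i ≤ (n:ℤ)-1
      · have : 2*(i:ℝ) ≤ (n:ℝ)-1 := by exact_mod_cast hpar
        linarith
      · have hev : (n:ℤ) = 2*i := by omega
        have hn6 : (6:ℤ) ≤ (n:ℤ) := by omega
        have hn6R : (6:ℝ) ≤ (n:ℝ) := by exact_mod_cast hn6
        have hevR : (n:ℝ) = 2*(i:ℝ) := by exact_mod_cast hev
        have h8 : (8:ℝ) ≤ s2 := by nlinarith [hs2sq, hs2n]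
        linarith
    have hlo : -s2 ≤ 10*(i:ℝ)+8-5*(n:ℝ) := by linarith
    have hsq : (10*(i:ℝ)+8-5*(n:ℝ))^2 ≤ s2^2 := sq_le_sq' hlo hU
    have key : 5*(i:ℝ)^2 + 8*(i:ℝ) - 5*(n:ℝ)*(i:ℝ) + (n:ℝ)^2 - 3*(n:ℝ) + 2 ≤ 0 := by
      nlinarith [hsq, hs2sq]
    exact_mod_cast key

lemma chooseA (k d : ℕ) (h : (k+d+1)*(k+1) < d*(d+1)) :
    (k+d+1).choose k < (k+d).choose (k+1) := by
  have h1 : (k+d).choose (k+1) * (k+1) = (k+d).choose k * d := by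
    rw [Nat.choose_succ_right_eq]; congr 1; omega
  have h2 : (k+d+1).choose k * (d+1) = (k+d).choose k * (k+d+1) := by
    have h3 := Nat.choose_mul_succ_eq (k+d) k
    rw [show k+d+1-k = d+1 from by omega] at h3
    exact h3.symm
  have hc : 0 < (k+d).choose k := Nat.choose_pos (by omega)
  have key : (k+d+1).choose k * ((k+1)*(d+1)) < (k+d).choose (k+1) * ((k+1)*(d+1)) := by
    calc (k+d+1).choose k * ((k+1)*(d+1)) = ((k+d+1).choose k * (d+1)) * (k+1) := by ring
      _ = ((k+d).choose k * (k+d+1)) * (k+1) := by rw [h2]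
      _ = (k+d).choose k * ((k+d+1) * (k+1)) := by ring
      _ < (k+d).choose k * (d*(d+1)) := mul_lt_mul_of_pos_left h hc
      _ = ((k+d).choose k * d) * (d+1) := by ring
      _ = ((k+d).choose (k+1) * (k+1)) * (d+1) := by rw [h1]
      _ = (k+d).choose (k+1) * ((k+1)*(d+1)) := by ring
  exact lt_of_mul_lt_mul_right key (Nat.zero_le _)

lemma chooseB (k d : ℕ) (h : d*(d+1) ≤ (k+d+1)*(k+1)) :
    (k+d).choose (k+1) ≤ (k+d+1).choose k := by
  have h1 : (k+d).choose (k+1) * (k+1) = (k+d).choose k * d := by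
    rw [Nat.choose_succ_right_eq]; congr 1; omega
  have h2 : (k+d+1).choose k * (d+1) = (k+d).choose k * (k+d+1) := by
    have h3 := Nat.choose_mul_succ_eq (k+d) k
    rw [show k+d+1-k = d+1 from by omega] at h3
    exact h3.symm
  have key : (k+d).choose (k+1) * ((k+1)*(d+1)) ≤ (k+d+1).choose k * ((k+1)*(d+1)) := by
    calc (k+d).choose (k+1) * ((k+1)*(d+1)) = ((k+d).choose (k+1) * (k+1))*(d+1) := by ring
      _ = ((k+d).choose k * d) * (d+1) := by rw [h1]
      _ = (k+d).choose k * (d*(d+1)) := by ring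
      _ ≤ (k+d).choose k * ((k+d+1)*(k+1)) := Nat.mul_le_mul (le_refl _) h
      _ = ((k+d).choose k * (k+d+1)) * (k+1) := by ring
      _ = ((k+d+1).choose k * (d+1)) * (k+1) := by rw [h2]
      _ = (k+d+1).choose k * ((k+1)*(d+1)) := by ring
  exact Nat.le_of_mul_le_mul_right key (by positivity)

lemma chooseC (k d : ℕ) (h : (k+d+1)*(k+1) ≤ d*(d+1)) :
    (k+d+1).choose k ≤ (k+d).choose (k+1) := by
  have h1 : (k+d).choose (k+1) * (k+1) = (k+d).choose k * d := by
    rw [Nat.choose_succ_right_eq]; congr 1; omega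
  have h2 : (k+d+1).choose k * (d+1) = (k+d).choose k * (k+d+1) := by
    have h3 := Nat.choose_mul_succ_eq (k+d) k
    rw [show k+d+1-k = d+1 from by omega] at h3
    exact h3.symm
  have key : (k+d+1).choose k * ((k+1)*(d+1)) ≤ (k+d).choose (k+1) * ((k+1)*(d+1)) := by
    calc (k+d+1).choose k * ((k+1)*(d+1)) = ((k+d+1).choose k * (d+1)) * (k+1) := by ring
      _ = ((k+d).choose k * (k+d+1)) * (k+1) := by rw [h2]
      _ = (k+d).choose k * ((k+d+1) * (k+1)) := by ring
      _ ≤ (k+d).choose k * (d*(d+1)) := Nat.mul_le_mul (le_refl _) h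
      _ = ((k+d).choose k * d) * (d+1) := by ring
      _ = ((k+d).choose (k+1) * (k+1)) * (d+1) := by rw [h1]
      _ = (k+d).choose (k+1) * ((k+1)*(d+1)) := by ring
  exact Nat.le_of_mul_le_mul_right key (by positivity)

theorem stmt12 (n : ℕ) (hn : 5 ≤ n) (s : ℕ → ℕ)
    (hs : ∀ i, s i = (n - i).choose i + (if 1 ≤ i then (n - i - 2).choose (i - 1) else 0)) :
    (∀ i : ℕ, 1 ≤ i → (i : ℤ) ≤ lam (n - 1) → s (i - 1) < s i) ∧
    (∀ i : ℕ, lam (n - 4) + 1 ≤ (i : ℤ) → i ≤ n / 2 → s (i + 1) ≤ s i) ∧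
    (∀ χ : ℕ, χ ≤ n / 2 →
      ((χ = 0 ∧ 0 < s 0) ∨ (1 ≤ χ ∧ s (χ - 1) < s χ)) →
      (∀ j, χ ≤ j → j < n / 2 → s (j + 1) ≤ s j) →
      lam (n - 1) ≤ (χ : ℤ) ∧ (χ : ℤ) ≤ lam (n - 4) + 1) := by
  have hhalf := lam_le_half n hn
  have hnn := lam_nonneg n hn
  have part1 : ∀ i : ℕ, 1 ≤ i → (i : ℤ) ≤ lam (n - 1) → s (i - 1) < s i := by
    intro i h1 hle
    have hi2 : i ≤ n/2 := by
      have : (i:ℤ) ≤ ((n/2:ℕ):ℤ) := le_trans hle hhalf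
      exact_mod_cast this
    have h2i : 2*i ≤ n := by omega
    obtain ⟨hA, hB⟩ := lam1 n hn (i:ℤ) hle
    rw [hs, hs]
    have ha : (n-(i-1)).choose (i-1) < (n-i).choose i := by
      have hki : (((i-1:ℕ)):ℤ) = (i:ℤ)-1 := by omega
      have hdi : (((n-2*i:ℕ)):ℤ) = (n:ℤ)-2*(i:ℤ) := by omega
      have hcond : ((i-1)+(n-2*i+1)+1)*((i-1)+1) < (n-2*i+1)*((n-2*i+1)+1) := by
        zify
        rw [hki, hdi]
        nlinarith [hA]
      have h' := chooseA (i-1) (n-2*i+1) hcond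
      rwa [show (i-1)+(n-2*i+1)+1 = n-(i-1) from by omega,
           show (i-1)+(n-2*i+1) = n-i from by omega,
           show (i-1)+1 = i from by omega] at h'
    have hb : (if 1 ≤ i-1 then (n-(i-1)-2).choose (i-1-1) else 0)
        ≤ (if 1 ≤ i then (n-i-2).choose (i-1) else 0) := by
      rw [if_pos h1]
      by_cases h2 : 2 ≤ i
      · rw [if_pos (by omega : 1 ≤ i-1)]
        have hki : (((i-2:ℕ)):ℤ) = (i:ℤ)-2 := by omega
        have hdi : (((n-2*i:ℕ)):ℤ) = (n:ℤ)-2*(i:ℤ) := by omega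
        have hcond : ((i-2)+(n-2*i)+1)*((i-2)+1) ≤ (n-2*i)*((n-2*i)+1) := by
          zify
          rw [hki, hdi]
          nlinarith [hB]
        have h' := chooseC (i-2) (n-2*i) hcond
        rwa [show (i-2)+(n-2*i)+1 = n-(i-1)-2 from by omega,
             show (i-2)+(n-2*i) = n-i-2 from by omega,
             show (i-2)+1 = i-1 from by omega,
             show i-2 = i-1-1 from by omega] at h'
      · have hi1 : i = 1 := by omega
        subst hi1
        simp
    exact Nat.add_lt_add_of_lt_of_le ha hb
  have part2 : ∀ i : ℕ, lam (n - 4) + 1 ≤ (i : ℤ) → i ≤ n / 2 → s (i + 1) ≤ s i := by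
    intro i hlow hup
    have h2i : 2*i ≤ n := by omega
    have h1i : 1 ≤ i := by
      have : (1:ℤ) ≤ (i:ℤ) := by omega
      exact_mod_cast this
    obtain ⟨hL, hB1⟩ := lam2 n hn (i:ℤ) hlow (by exact_mod_cast h2i)
    rw [hs, hs]
    have ha : (n-(i+1)).choose (i+1) ≤ (n-i).choose i := by
      by_cases hcase : 2*i+1 ≤ n
      · have hdi : (((n-2*i-1:ℕ)):ℤ) = (n:ℤ)-2*(i:ℤ)-1 := by omega
        have hcond : (n-2*i-1)*((n-2*i-1)+1) ≤ (i+(n-2*i-1)+1)*(i+1) := by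
          zify
          rw [hdi]
          nlinarith [hL]
        have h' := chooseB i (n-2*i-1) hcond
        rwa [show i+(n-2*i-1)+1 = n-i from by omega,
             show i+(n-2*i-1) = n-(i+1) from by omega] at h'
      · have h0 : (n-(i+1)).choose (i+1) = 0 := Nat.choose_eq_zero_of_lt (by omega)
        simp [h0]
    have hb : (if 1 ≤ i+1 then (n-(i+1)-2).choose (i+1-1) else 0)
        ≤ (if 1 ≤ i then (n-i-2).choose (i-1) else 0) := by
      rw [if_pos (by omega : 1 ≤ i+1), if_pos h1i]
      simp only [Nat.add_sub_cancel]
      by_cases hcase : 2*i+3 ≤ n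
      · have hki : (((i-1:ℕ)):ℤ) = (i:ℤ)-1 := by omega
        have hdi : (((n-2*i-2:ℕ)):ℤ) = (n:ℤ)-2*(i:ℤ)-2 := by omega
        have hcond : (n-2*i-2)*((n-2*i-2)+1) ≤ ((i-1)+(n-2*i-2)+1)*((i-1)+1) := by
          zify
          rw [hki, hdi]
          nlinarith [hB1]
        have h' := chooseB (i-1) (n-2*i-2) hcond
        rwa [show (i-1)+(n-2*i-2)+1 = n-i-2 from by omega,
             show (i-1)+(n-2*i-2) = n-(i+1)-2 from by omega,
             show (i-1)+1 = i from by omega] at h'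
      · have h0 : (n-(i+1)-2).choose i = 0 := Nat.choose_eq_zero_of_lt (by omega)
        simp [h0]
    exact Nat.add_le_add ha hb
  refine ⟨part1, part2, ?_⟩
  intro χ hχhalf hmode hdec
  constructor
  · by_contra hcon
    push_neg at hcon
    have hstep : ((χ+1:ℕ):ℤ) ≤ lam (n-1) := by push_cast; omega
    have hlt := part1 (χ+1) (by omega) hstep
    simp only [Nat.add_sub_cancel] at hlt
    have hχlt : χ < n/2 := by
      have : (χ:ℤ) < ((n/2:ℕ):ℤ) := lt_of_lt_of_le hcon hhalf
      exact_mod_cast this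
    have := hdec χ (le_refl χ) hχlt
    omega
  · by_contra hcon
    push_neg at hcon
    have hχ2 : 2 ≤ χ := by
      have : (2:ℤ) ≤ (χ:ℤ) := by omega
      exact_mod_cast this
    rcases hmode with ⟨h0, -⟩ | ⟨-, hlt⟩
    · omega
    · have hc1 : lam (n-4) + 1 ≤ ((χ-1:ℕ):ℤ) := by
        have hc : ((χ-1:ℕ):ℤ) = (χ:ℤ)-1 := by omega
        rw [hc]; omega
      have h' := part2 (χ-1) hc1 (by omega)
      rw [show χ-1+1 = χ from by omega] at h'
      omega
end

section
/- For n ≥ 5, the sequence of coefficients s_i(Pan_n) = binomial(n-i, i) + binomial(n-i-1, i-1) + binomial(n-i+1, i-1), 0 ≤ i ≤ ⌊n/2⌋+1, of the independence polynomial of the pan graph Pan_n is unimodal. -/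
set_option maxHeartbeats 1000000

lemma chooseId (a k : ℕ) (ha : 1 ≤ a) :
    (a-1).choose (k+1) * ((k+1)*a) = a.choose k * ((a-(k+1))*(a-k)) := by
  have h1 := Nat.choose_succ_right_eq (a-1) k
  have h2 := Nat.add_one_mul_choose_eq (a-1) k
  have h3 := Nat.choose_succ_right_eq a k
  have e : a - 1 + 1 = a := by omega
  rw [e] at h2
  have e2 : a - 1 - k = a - (k+1) := by omega
  rw [e2] at h1
  calc (a-1).choose (k+1) * ((k+1)*a) = ((a-1).choose (k+1) * (k+1)) * a := by ring
    _ = ((a-1).choose k * (a-(k+1))) * a := by rw [h1]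
    _ = (a * (a-1).choose k) * (a-(k+1)) := by ring
    _ = (a.choose (k+1) * (k+1)) * (a-(k+1)) := by rw [h2]
    _ = (a.choose k * (a-k)) * (a-(k+1)) := by rw [h3]
    _ = a.choose k * ((a-(k+1))*(a-k)) := by ring

lemma Finc (N k : ℕ) (hk : k < N)
    (h : (k+1)*(N-k) ≤ (N-(2*k+1))*(N-2*k)) :
    (N-k).choose k ≤ (N-(k+1)).choose (k+1) := by
  have hid := chooseId (N-k) k (by omega)
  have e1 : N - k - 1 = N - (k+1) := by omega
  have e2 : N - k - (k+1) = N - (2*k+1) := by omega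
  have e3 : N - k - k = N - 2*k := by omega
  rw [e1, e2, e3] at hid
  have pos : 0 < (k+1)*(N-k) := Nat.mul_pos (by omega) (by omega)
  have h2 : (N-k).choose k * ((k+1)*(N-k)) ≤ (N-(k+1)).choose (k+1) * ((k+1)*(N-k)) := by
    rw [hid]
    exact Nat.mul_le_mul_left _ h
  exact Nat.le_of_mul_le_mul_right h2 pos

lemma Fdec (N k : ℕ) (hk : k < N)
    (h : (N-(2*k+1))*(N-2*k) ≤ (k+1)*(N-k)) :
    (N-(k+1)).choose (k+1) ≤ (N-k).choose k := by
  have hid := chooseId (N-k) k (by omega)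
  have e1 : N - k - 1 = N - (k+1) := by omega
  have e2 : N - k - (k+1) = N - (2*k+1) := by omega
  have e3 : N - k - k = N - 2*k := by omega
  rw [e1, e2, e3] at hid
  have pos : 0 < (k+1)*(N-k) := Nat.mul_pos (by omega) (by omega)
  have h2 : (N-(k+1)).choose (k+1) * ((k+1)*(N-k)) ≤ (N-k).choose k * ((k+1)*(N-k)) := by
    rw [hid]
    exact Nat.mul_le_mul_left _ h
  exact Nat.le_of_mul_le_mul_right h2 pos

lemma s_succ (n : ℕ) (s : ℕ → ℕ)
    (hs : ∀ i, s i = (n - i).choose i +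
      (if 1 ≤ i then (n - i - 1).choose (i - 1) + (n - i + 1).choose (i - 1) else 0))
    (j : ℕ) (hj : j + 1 ≤ n) :
    s (j+1) = (n-(j+1)).choose (j+1) + (((n-2)-j).choose j + (n-j).choose j) := by
  rw [hs (j+1), if_pos (by omega)]
  have e1 : n-(j+1)-1 = (n-2)-j := by omega
  have e3 : n-(j+1)+1 = n-j := by omega
  rw [e1, e3, Nat.add_sub_cancel]

theorem stmt14 (n : ℕ) (hn : 5 ≤ n) (s : ℕ → ℕ)
    (hs : ∀ i, s i = (n - i).choose i +
      (if 1 ≤ i then (n - i - 1).choose (i - 1) + (n - i + 1).choose (i - 1) else 0)) :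
    ∃ m ≤ n / 2 + 1,
      (∀ i, i < m → s i ≤ s (i + 1)) ∧
      (∀ i, m ≤ i → i < n / 2 + 1 → s (i + 1) ≤ s i) := by
  have hwit : ¬((n/2+1)*(n-n/2) ≤ (n-(2*(n/2)+1))*(n-2*(n/2))) := by
    have e : n-(2*(n/2)+1) = 0 := by omega
    rw [e, Nat.zero_mul]
    have hp : 0 < (n/2+1)*(n-n/2) := Nat.mul_pos (by omega) (by omega)
    omega
  have hex : ∃ k, ¬((k+1)*(n-k) ≤ (n-(2*k+1))*(n-2*k)) := ⟨n/2, hwit⟩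
  obtain ⟨m0, hm0le, hNA, hAlt⟩ :
      ∃ m0, m0 ≤ n/2 ∧ ¬((m0+1)*(n-m0) ≤ (n-(2*m0+1))*(n-2*m0)) ∧
        ∀ k, k < m0 → (k+1)*(n-k) ≤ (n-(2*k+1))*(n-2*k) :=
    ⟨Nat.find hex, Nat.find_min' hex hwit, Nat.find_spec hex,
      fun k hk => not_not.mp (Nat.find_min hex hk)⟩
  have hm : 1 ≤ m0 := by
    rcases Nat.eq_zero_or_pos m0 with h0 | h
    · exfalso
      apply hNA
      rw [h0]
      have : n ≤ (n-1)*n := Nat.le_mul_of_pos_left n (by omega)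
      simpa using this
    · exact h
  -- increasing part
  have S1 : ∀ i, i < m0 → s i ≤ s (i+1) := by
    intro i hi
    rcases Nat.eq_zero_or_pos i with h0 | h1
    · subst h0
      rw [hs 0, hs 1]
      simp [Nat.choose_one_right]
    · obtain ⟨j, rfl⟩ : ∃ j, i = j + 1 := ⟨i-1, by omega⟩
      have hAi := hAlt (j+1) hi
      have h2n : 2*(j+1) ≤ n := by omega
      have hxx : 2*(j+1)+2 ≤ n := by
        by_contra hc
        have e0 : n-(2*(j+1)+1) = 0 := by omega
        rw [e0, Nat.zero_mul] at hAi
        have hp : 0 < (j+1+1)*(n-(j+1)) := Nat.mul_pos (by omega) (by omega)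
        omega
      obtain ⟨x, hxeq⟩ : ∃ x, n = 2*j + x + 4 := ⟨n - (2*j+4), by omega⟩
      have hA' : (j+2)*(j+x+3) ≤ (x+1)*(x+2) := by
        have e1 : n-(j+1) = j+x+3 := by omega
        have e2 : n-(2*(j+1)+1) = x+1 := by omega
        have e3 : n-2*(j+1) = x+2 := by omega
        rw [e1, e2, e3] at hAi
        linarith [hAi]
      have t1 : (n-(j+1)).choose (j+1) ≤ (n-(j+1+1)).choose (j+1+1) := by
        refine Finc n (j+1) (by omega) ?_
        have e1 : n-(j+1) = j+x+3 := by omega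
        have e2 : n-(2*(j+1)+1) = x+1 := by omega
        have e3 : n-2*(j+1) = x+2 := by omega
        rw [e1, e2, e3]
        nlinarith [hA']
      have t2 : (n-j).choose j ≤ (n-(j+1)).choose (j+1) := by
        refine Finc n j (by omega) ?_
        have e1 : n-j = j+x+4 := by omega
        have e2 : n-(2*j+1) = x+3 := by omega
        have e3 : n-(2*j) = x+4 := by omega
        rw [e1, e2, e3]
        nlinarith [hA']
      have t3 : ((n-2)-j).choose j ≤ ((n-2)-(j+1)).choose (j+1) := by
        refine Finc (n-2) j (by omega) ?_
        have e1 : (n-2)-j = j+x+2 := by omega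
        have e2 : (n-2)-(2*j+1) = x+1 := by omega
        have e3 : (n-2)-(2*j) = x+2 := by omega
        rw [e1, e2, e3]
        nlinarith [hA']
      rw [s_succ n s hs j (by omega), s_succ n s hs (j+1) (by omega)]
      exact add_le_add t1 (add_le_add t3 t2)
  -- decreasing part
  have S2 : ∀ i, m0 + 1 ≤ i → i ≤ n/2 → s (i+1) ≤ s i := by
    intro i h1 h2
    obtain ⟨d', rfl⟩ : ∃ d', i = m0 + d' + 1 := ⟨i - m0 - 1, by omega⟩
    have h2n : 2*(m0+d'+1) ≤ n := by omega
    obtain ⟨y, hy⟩ : ∃ y, n = 2*m0 + 2*d' + 2 + y := ⟨n - (2*m0+2*d'+2), by omega⟩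
    have H : (2*d'+y+1)*(2*d'+y+2) < (m0+1)*(m0+2*d'+2+y) := by
      have e1 : n-(2*m0+1) = 2*d'+y+1 := by omega
      have e2 : n-2*m0 = 2*d'+y+2 := by omega
      have e3 : n-m0 = m0+2*d'+2+y := by omega
      rw [e1, e2, e3] at hNA
      omega
    have d1 : (n-(m0+d'+1+1)).choose (m0+d'+1+1) ≤ (n-(m0+d'+1)).choose (m0+d'+1) := by
      refine Fdec n (m0+d'+1) (by omega) ?_
      rcases y with _ | y'
      · have e0 : n-2*(m0+d'+1) = 0 := by omega
        rw [e0, Nat.mul_zero]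
        exact Nat.zero_le _
      · have e1 : n-(2*(m0+d'+1)+1) = y' := by omega
        have e2 : n-2*(m0+d'+1) = y'+1 := by omega
        have e3 : n-(m0+d'+1) = m0+d'+y'+2 := by omega
        rw [e1, e2, e3]
        nlinarith [H]
    have d2 : (n-(m0+d'+1)).choose (m0+d'+1) ≤ (n-(m0+d')).choose (m0+d') := by
      refine Fdec n (m0+d') (by omega) ?_
      have e1 : n-(2*(m0+d')+1) = y+1 := by omega
      have e2 : n-2*(m0+d') = y+2 := by omega
      have e3 : n-(m0+d') = m0+d'+y+2 := by omega
      rw [e1, e2, e3]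
      nlinarith [H]
    have d3 : ((n-2)-(m0+d'+1)).choose (m0+d'+1) ≤ ((n-2)-(m0+d')).choose (m0+d') := by
      refine Fdec (n-2) (m0+d') (by omega) ?_
      rcases y with _ | y'
      · have e0 : (n-2)-2*(m0+d') = 0 := by omega
        rw [e0, Nat.mul_zero]
        exact Nat.zero_le _
      · have e1 : (n-2)-(2*(m0+d')+1) = y' := by omega
        have e2 : (n-2)-2*(m0+d') = y'+1 := by omega
        have e3 : (n-2)-(m0+d') = m0+d'+y'+1 := by omega
        rw [e1, e2, e3]
        by_cases hc : y' ≤ m0+d'+1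
        · exact Nat.mul_le_mul hc (by omega)
        · nlinarith [H]
    rw [s_succ n s hs (m0+d') (by omega), s_succ n s hs (m0+d'+1) (by omega)]
    exact add_le_add d1 (add_le_add d3 d2)
  by_cases hcase : s (m0+1) ≤ s m0
  · refine ⟨m0, by omega, fun i hi => S1 i hi, fun i hmi hiu => ?_⟩
    rcases eq_or_lt_of_le hmi with rfl | hlt
    · exact hcase
    · exact S2 i hlt (by omega)
  · refine ⟨m0+1, by omega, fun i hi => ?_, fun i hmi hiu => S2 i hmi (by omega)⟩
    rcases Nat.lt_succ_iff_lt_or_eq.mp hi with hlt | rfl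
    · exact S1 i hlt
    · exact le_of_lt (lt_of_not_ge hcase)
end

section
/- For n ≥ 5 and all i with 1 ≤ i ≤ χ_{n+1}, where χ_{n+1} is the mode of the independence polynomial of CE_{n+1}, one has s_{i-1}(Pan_n) < s_i(Pan_n), where s_i(Pan_n) = binomial(n-i, i) + binomial(n-i-1, i-1) + binomial(n-i+1, i-1). Moreover s_i(Pan_n) = s_i(CE_{n+1}) + binomial(n-i, i-2). -/
namespace Stmt15Aux

/-- Integer polynomial whose positivity encodes `sPan (k+1) < sPan (k+2)` when `n = 2k+c+3`. -/
def fpan (k c : ℤ) : ℤ :=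
  c*(c+1)*(c+2)*(c+3)*(k+c+1) + c*(k+2)*(c+1)*(c+2)*(c+3)
    - ((k+1)*(k+2)*(c+2)*(c+3)*(k+c+1) + (k+1)*(k+2)*(k+c+3)*(k+c+2)*(k+c+1))

lemma iA2 (k c : ℕ) : (k+c).choose (k+1) * (k+1) = (k+c).choose k * c := by
  have h := Nat.choose_succ_right_eq (k+c) k
  rwa [Nat.add_sub_cancel_left] at h

lemma iA4 (k c : ℕ) : (k+c+1).choose k * (c+1) = (k+c).choose k * (k+c+1) := by
  have h := Nat.choose_mul_succ_eq (k+c) k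
  rw [show k+c+1-k = c+1 by omega] at h
  exact h.symm

lemma iA1 (k c : ℕ) :
    (k+c+2).choose (k+2) * ((k+2)*(k+1)) = (k+c).choose k * ((k+c+2)*(k+c+1)) := by
  have e1 : (k+c+2) * (k+c+1).choose (k+1) = (k+c+2).choose (k+2) * (k+2) :=
    Nat.add_one_mul_choose_eq (k+c+1) (k+1)
  have e2 : (k+c+1) * (k+c).choose k = (k+c+1).choose (k+1) * (k+1) :=
    Nat.add_one_mul_choose_eq (k+c) k
  calc (k+c+2).choose (k+2) * ((k+2)*(k+1))
      = ((k+c+2).choose (k+2) * (k+2)) * (k+1) := by ring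
    _ = ((k+c+2) * (k+c+1).choose (k+1)) * (k+1) := by rw [e1]
    _ = (k+c+2) * ((k+c+1).choose (k+1) * (k+1)) := by ring
    _ = (k+c+2) * ((k+c+1) * (k+c).choose k) := by rw [e2]
    _ = (k+c).choose k * ((k+c+2)*(k+c+1)) := by ring

lemma iB1 (k c : ℕ) :
    (k+c+1).choose (k+2) * ((k+2)*(k+1)) = (k+c).choose k * ((k+c+1)*c) := by
  have e1 : (k+c+1) * (k+c).choose (k+1) = (k+c+1).choose (k+2) * (k+2) :=
    Nat.add_one_mul_choose_eq (k+c) (k+1)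
  calc (k+c+1).choose (k+2) * ((k+2)*(k+1))
      = ((k+c+1).choose (k+2) * (k+2)) * (k+1) := by ring
    _ = ((k+c+1) * (k+c).choose (k+1)) * (k+1) := by rw [e1]
    _ = (k+c+1) * ((k+c).choose (k+1) * (k+1)) := by ring
    _ = (k+c+1) * ((k+c).choose k * c) := by rw [iA2]
    _ = (k+c).choose k * ((k+c+1)*c) := by ring

lemma iA3 (k c : ℕ) :
    (k+c+3).choose (k+1) * ((k+1)*((c+1)*(c+2)))
      = (k+c).choose k * ((k+c+3)*((k+c+2)*(k+c+1))) := by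
  have e1 : (k+c+3) * (k+c+2).choose k = (k+c+3).choose (k+1) * (k+1) :=
    Nat.add_one_mul_choose_eq (k+c+2) k
  have e2 : (k+c+2).choose k * (c+2) = (k+c+1).choose k * (k+c+2) := iA4 k (c+1)
  have e3 : (k+c+1).choose k * (c+1) = (k+c).choose k * (k+c+1) := iA4 k c
  calc (k+c+3).choose (k+1) * ((k+1)*((c+1)*(c+2)))
      = ((k+c+3).choose (k+1) * (k+1)) * ((c+1)*(c+2)) := by ring
    _ = ((k+c+3) * (k+c+2).choose k) * ((c+1)*(c+2)) := by rw [e1]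
    _ = (k+c+3) * (c+1) * ((k+c+2).choose k * (c+2)) := by ring
    _ = (k+c+3) * (c+1) * ((k+c+1).choose k * (k+c+2)) := by rw [e2]
    _ = (k+c+3) * (k+c+2) * ((k+c+1).choose k * (c+1)) := by ring
    _ = (k+c+3) * (k+c+2) * ((k+c).choose k * (k+c+1)) := by rw [e3]
    _ = (k+c).choose k * ((k+c+3)*((k+c+2)*(k+c+1))) := by ring

lemma iB4 (k c : ℕ) :
    (k+c+3).choose k * ((c+1)*((c+2)*(c+3)))
      = (k+c).choose k * ((k+c+3)*((k+c+2)*(k+c+1))) := by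
  have e1 : (k+c+3).choose k * (c+3) = (k+c+2).choose k * (k+c+3) := iA4 k (c+2)
  have e2 : (k+c+2).choose k * (c+2) = (k+c+1).choose k * (k+c+2) := iA4 k (c+1)
  have e3 : (k+c+1).choose k * (c+1) = (k+c).choose k * (k+c+1) := iA4 k c
  calc (k+c+3).choose k * ((c+1)*((c+2)*(c+3)))
      = ((k+c+3).choose k * (c+3)) * ((c+1)*(c+2)) := by ring
    _ = ((k+c+2).choose k * (k+c+3)) * ((c+1)*(c+2)) := by rw [e1]
    _ = (k+c+3) * (c+1) * ((k+c+2).choose k * (c+2)) := by ring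
    _ = (k+c+3) * (c+1) * ((k+c+1).choose k * (k+c+2)) := by rw [e2]
    _ = (k+c+3) * (k+c+2) * ((k+c+1).choose k * (c+1)) := by ring
    _ = (k+c+3) * (k+c+2) * ((k+c).choose k * (k+c+1)) := by rw [e3]
    _ = (k+c).choose k * ((k+c+3)*((k+c+2)*(k+c+1))) := by ring

/-- From the increase of the CE-sequence at this index, get the polynomial inequality. -/
lemma pce_lt (k c : ℕ)
    (h : (k+c+3).choose (k+1) + (k+c+1).choose k
        < (k+c+2).choose (k+2) + (k+c).choose (k+1)) :
    ((k:ℤ)+2)*((k:ℤ)+(c:ℤ)+3)*((k:ℤ)+(c:ℤ)+2)*((k:ℤ)+(c:ℤ)+1)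
        + ((k:ℤ)+2)*((k:ℤ)+1)*((c:ℤ)+2)*((k:ℤ)+(c:ℤ)+1)
      < ((k:ℤ)+(c:ℤ)+2)*((k:ℤ)+(c:ℤ)+1)*((c:ℤ)+1)*((c:ℤ)+2)
        + ((k:ℤ)+2)*((c:ℤ)+1)*((c:ℤ)+2)*(c:ℤ) := by
  have hb : (0:ℤ) < ((k+c).choose k : ℤ) := by
    exact_mod_cast Nat.choose_pos (Nat.le_add_right k c)
  have i1 := iA1 k c
  have i2 := iA2 k c
  have i3 := iA3 k c
  have i4 := iA4 k c
  zify at i1 i2 i3 i4 h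
  have key : ((k:ℤ)+1)*((k:ℤ)+2)*((c:ℤ)+1)*((c:ℤ)+2) *
      ((((k+c+2).choose (k+2) : ℤ) + ((k+c).choose (k+1) : ℤ))
        - (((k+c+3).choose (k+1) : ℤ) + ((k+c+1).choose k : ℤ)))
      = ((k+c).choose k : ℤ) *
        ((((k:ℤ)+(c:ℤ)+2)*((k:ℤ)+(c:ℤ)+1)*((c:ℤ)+1)*((c:ℤ)+2)
            + ((k:ℤ)+2)*((c:ℤ)+1)*((c:ℤ)+2)*(c:ℤ))
          - (((k:ℤ)+2)*((k:ℤ)+(c:ℤ)+3)*((k:ℤ)+(c:ℤ)+2)*((k:ℤ)+(c:ℤ)+1)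
            + ((k:ℤ)+2)*((k:ℤ)+1)*((c:ℤ)+2)*((k:ℤ)+(c:ℤ)+1))) := by
    linear_combination (((c:ℤ)+1)*((c:ℤ)+2)) * i1
      + (((k:ℤ)+2)*((c:ℤ)+1)*((c:ℤ)+2)) * i2
      - ((k:ℤ)+2) * i3
      - (((k:ℤ)+1)*((k:ℤ)+2)*((c:ℤ)+2)) * i4
  have hM : (0:ℤ) < ((k:ℤ)+1)*((k:ℤ)+2)*((c:ℤ)+1)*((c:ℤ)+2) := by positivity
  have hd : (0:ℤ) < (((k+c+2).choose (k+2) : ℤ) + ((k+c).choose (k+1) : ℤ))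
      - (((k+c+3).choose (k+1) : ℤ) + ((k+c+1).choose k : ℤ)) := by linarith
  have h5 : (0:ℤ) < ((k+c).choose k : ℤ) *
      ((((k:ℤ)+(c:ℤ)+2)*((k:ℤ)+(c:ℤ)+1)*((c:ℤ)+1)*((c:ℤ)+2)
          + ((k:ℤ)+2)*((c:ℤ)+1)*((c:ℤ)+2)*(c:ℤ))
        - (((k:ℤ)+2)*((k:ℤ)+(c:ℤ)+3)*((k:ℤ)+(c:ℤ)+2)*((k:ℤ)+(c:ℤ)+1)
          + ((k:ℤ)+2)*((k:ℤ)+1)*((c:ℤ)+2)*((k:ℤ)+(c:ℤ)+1))) := by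
    rw [← key]; exact mul_pos hM hd
  nlinarith [h5, hb]

/-- From positivity of the Pan polynomial, get the increase of the Pan-sequence. -/
lemma pan_of_fpan (k c : ℕ) (h : 0 < fpan (k:ℤ) (c:ℤ)) :
    (k+c+2).choose (k+1) + ((k+c+1).choose k + (k+c+3).choose k)
      < (k+c+1).choose (k+2) + ((k+c).choose (k+1) + (k+c+2).choose (k+1)) := by
  have hb : (0:ℤ) < ((k+c).choose k : ℤ) := by
    exact_mod_cast Nat.choose_pos (Nat.le_add_right k c)
  have i5 := iB1 k c
  have i2 := iA2 k c
  have i4 := iA4 k c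
  have i6 := iB4 k c
  zify at i5 i2 i4 i6
  have key : ((k:ℤ)+1)*((k:ℤ)+2)*((c:ℤ)+1)*((c:ℤ)+2)*((c:ℤ)+3) *
      ((((k+c+1).choose (k+2) : ℤ) + ((k+c).choose (k+1) : ℤ))
        - (((k+c+1).choose k : ℤ) + ((k+c+3).choose k : ℤ)))
      = ((k+c).choose k : ℤ) * fpan (k:ℤ) (c:ℤ) := by
    unfold fpan
    linear_combination (((c:ℤ)+1)*((c:ℤ)+2)*((c:ℤ)+3)) * i5
      + (((k:ℤ)+2)*((c:ℤ)+1)*((c:ℤ)+2)*((c:ℤ)+3)) * i2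
      - (((k:ℤ)+1)*((k:ℤ)+2)*((c:ℤ)+2)*((c:ℤ)+3)) * i4
      - (((k:ℤ)+1)*((k:ℤ)+2)) * i6
  have hM : (0:ℤ) < ((k:ℤ)+1)*((k:ℤ)+2)*((c:ℤ)+1)*((c:ℤ)+2)*((c:ℤ)+3) := by positivity
  have h5 : (0:ℤ) < ((k:ℤ)+1)*((k:ℤ)+2)*((c:ℤ)+1)*((c:ℤ)+2)*((c:ℤ)+3) *
      ((((k+c+1).choose (k+2) : ℤ) + ((k+c).choose (k+1) : ℤ))
        - (((k+c+1).choose k : ℤ) + ((k+c+3).choose k : ℤ))) := by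
    rw [key]; exact mul_pos hb h
  have h6 : (0:ℤ) < (((k+c+1).choose (k+2) : ℤ) + ((k+c).choose (k+1) : ℤ))
      - (((k+c+1).choose k : ℤ) + ((k+c+3).choose k : ℤ)) := by
    nlinarith [h5, hM]
  have h7 : (k+c+1).choose k + (k+c+3).choose k
      < (k+c+1).choose (k+2) + (k+c).choose (k+1) := by
    zify; linarith
  omega

/-- Separator: CE increase at an index implies the Pan polynomial is positive there. -/
lemma sep_start (k c : ℤ) (hk : 0 ≤ k) (hc : 0 ≤ c)
    (h : (k+2)*(k+c+3)*(k+c+2)*(k+c+1) + (k+2)*(k+1)*(c+2)*(k+c+1)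
        < (k+c+2)*(k+c+1)*(c+1)*(c+2) + (k+2)*(c+1)*(c+2)*c) :
    0 < fpan k c := by
  have m1 : (0:ℤ) ≤ k*c := mul_nonneg hk hc
  have m2 : (0:ℤ) ≤ k*k := mul_nonneg hk hk
  have m3 : (0:ℤ) ≤ k*k*c := mul_nonneg m2 hc
  have m4 : (0:ℤ) ≤ k*k*k := mul_nonneg m2 hk
  have m5 : (0:ℤ) ≤ k*k*k*c := mul_nonneg m4 hc
  have m6 : (0:ℤ) ≤ k*k*k*k := mul_nonneg m4 hk
  have m7 : (0:ℤ) ≤ c*c := mul_nonneg hc hc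
  have m8 : (0:ℤ) ≤ c*c*c := mul_nonneg m7 hc
  have m9 : (0:ℤ) ≤ k*(c*c) := mul_nonneg hk m7
  have hS : 0 ≤ c*c - c*k - k*k - 2*k - 2 := by
    by_contra hS'
    push_neg at hS'
    have h1 : c*c - c*k - k*k - 2*k - 2 ≤ -1 := by linarith
    have hQ : (0:ℤ) ≤ c*c + 3*(c*k) + k*k + 6*c + 5*k + 7 := by nlinarith
    have h2 : (c*c - c*k - k*k - 2*k - 2) * (c*c + 3*(c*k) + k*k + 6*c + 5*k + 7)
        ≤ -1 * (c*c + 3*(c*k) + k*k + 6*c + 5*k + 7) :=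
      mul_le_mul_of_nonneg_right h1 hQ
    nlinarith [h2, h]
  have hQ2 : (0:ℤ) ≤ c*c*c + 9*(c*c) + 27*c + 33 + k*(3*(c*c)+17*c+29)
      + k*k*(2*c+8) + k*k*k := by nlinarith
  have h3 : (0:ℤ) ≤ (c*c - c*k - k*k - 2*k - 2) *
      (c*c*c + 9*(c*c) + 27*c + 33 + k*(3*(c*c)+17*c+29) + k*k*(2*c+8) + k*k*k) :=
    mul_nonneg hS hQ2
  unfold fpan
  nlinarith [h3]

/-- Separator: Pan polynomial positive at `(k+1, c)` implies positive at `(k, c+2)`. -/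
lemma sep_step (k c : ℤ) (hk : 0 ≤ k) (hc : 0 ≤ c) (h : 0 < fpan (k+1) c) :
    0 < fpan k (c+2) := by
  have m1 : (0:ℤ) ≤ k*c := mul_nonneg hk hc
  have m2 : (0:ℤ) ≤ k*k := mul_nonneg hk hk
  have m3 : (0:ℤ) ≤ k*k*c := mul_nonneg m2 hc
  have m4 : (0:ℤ) ≤ k*k*k := mul_nonneg m2 hk
  have m5 : (0:ℤ) ≤ k*k*k*c := mul_nonneg m4 hc
  have m6 : (0:ℤ) ≤ k*k*k*k := mul_nonneg m4 hk
  have m7 : (0:ℤ) ≤ c*c := mul_nonneg hc hc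
  have m8 : (0:ℤ) ≤ c*c*c := mul_nonneg m7 hc
  have m9 : (0:ℤ) ≤ k*(c*c) := mul_nonneg hk m7
  unfold fpan at h ⊢
  have hS : 0 ≤ c*c - c*k - k*k - 2*c - k := by
    by_contra hS'
    push_neg at hS'
    have h1 : c*c - c*k - k*k - 2*c - k ≤ -1 := by linarith
    have hQ : (0:ℤ) ≤ c*c*c + 13*(c*c) + 55*c + 75 + k*(3*(c*c)+22*c+30)
        + k*k*(2*c+6) + k*k*k := by nlinarith
    have h2 : (c*c - c*k - k*k - 2*c - k) *
        (c*c*c + 13*(c*c) + 55*c + 75 + k*(3*(c*c)+22*c+30) + k*k*(2*c+6) + k*k*k)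
        ≤ -1 * (c*c*c + 13*(c*c) + 55*c + 75 + k*(3*(c*c)+22*c+30) + k*k*(2*c+6) + k*k*k) :=
      mul_le_mul_of_nonneg_right h1 hQ
    nlinarith [h2, h]
  have hQ3 : (0:ℤ) ≤ c*c*c + 21*(c*c) + 179*c + 819 + k*(3*(c*c)+50*c+362)
      + k*k*(2*c+42) + k*k*k := by nlinarith
  have h3 : (0:ℤ) ≤ (c*c - c*k - k*k - 2*c - k) *
      (c*c*c + 21*(c*c) + 179*c + 819 + k*(3*(c*c)+50*c+362) + k*k*(2*c+42) + k*k*k) :=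
    mul_nonneg hS hQ3
  nlinarith [h3]

end Stmt15Aux

open Stmt15Aux in
theorem stmt15 (n : ℕ) (hn : 5 ≤ n) (sPan sCE : ℕ → ℕ)
    (hPan : ∀ i, sPan i = (n - i).choose i +
      (if 1 ≤ i then (n - i - 1).choose (i - 1) + (n - i + 1).choose (i - 1) else 0))
    (hCE : ∀ i, sCE i = (n + 1 - i).choose i +
      (if 1 ≤ i then (n - i - 1).choose (i - 1) else 0))
    (χ : ℕ) (hχ1 : χ ≤ (n + 1) / 2)
    (hχ2 : (χ = 0 ∧ 0 < sCE 0) ∨ (1 ≤ χ ∧ sCE (χ - 1) < sCE χ))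
    (hχ3 : ∀ j, χ ≤ j → j < (n + 1) / 2 → sCE (j + 1) ≤ sCE j) :
    (∀ i, 1 ≤ i → i ≤ χ → sPan (i - 1) < sPan i) ∧
    (∀ i, sPan i = sCE i + (if 2 ≤ i then (n - i).choose (i - 2) else 0)) := by
  have h2χ : 2 * χ ≤ n + 1 := by omega
  constructor
  · -- Part 1: strict increase of sPan up to χ
    intro i hi1 hi2
    have hχpos : 1 ≤ χ := le_trans hi1 hi2
    have hχlt : sCE (χ - 1) < sCE χ := by
      rcases hχ2 with ⟨h0, _⟩ | ⟨_, h⟩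
      · omega
      · exact h
    rcases Nat.lt_or_ge i 2 with hi | hi
    · -- i = 1
      have hi' : i = 1 := by omega
      subst hi'
      rw [show (1:ℕ) - 1 = 0 from rfl, hPan 0, hPan 1,
        if_neg (by omega : ¬ (1:ℕ) ≤ 0), if_pos (le_refl 1)]
      have e1 : (n - 1).choose 1 = n - 1 := Nat.choose_one_right _
      have e2 : (n - 0).choose 0 = 1 := Nat.choose_zero_right _
      have e3 : (n - 1 - 1).choose (1-1) = 1 := Nat.choose_zero_right _
      have e4 : (n - 1 + 1).choose (1-1) = 1 := Nat.choose_zero_right _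
      omega
    · -- 2 ≤ i ≤ χ
      have hχ2' : 2 ≤ χ := le_trans hi hi2
      obtain ⟨k0, c0, hk0, hc0⟩ : ∃ k0 c0, k0 = χ - 2 ∧ c0 = n + 1 - 2*χ :=
        ⟨_, _, rfl, rfl⟩
      have hA : sCE χ = (k0+c0+2).choose (k0+2) + (k0+c0).choose (k0+1) := by
        rw [hCE χ, if_pos hχpos,
          show n+1-χ = k0+c0+2 by omega,
          show n-χ-1 = k0+c0 by omega,
          show χ-1 = k0+1 by omega,
          show χ = k0+2 by omega]
      have hB : sCE (χ-1) = (k0+c0+3).choose (k0+1) + (k0+c0+1).choose k0 := by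
        rw [hCE (χ-1), if_pos (by omega : 1 ≤ χ - 1),
          show n+1-(χ-1) = k0+c0+3 by omega,
          show n-(χ-1)-1 = k0+c0+1 by omega,
          show χ-1-1 = k0 by omega,
          show χ-1 = k0+1 by omega]
      have hcelt : (k0+c0+3).choose (k0+1) + (k0+c0+1).choose k0
          < (k0+c0+2).choose (k0+2) + (k0+c0).choose (k0+1) := by
        rw [← hA, ← hB]; exact hχlt
      have hpoly := pce_lt k0 c0 hcelt
      have hfχ : 0 < fpan (k0:ℤ) (c0:ℤ) :=
        sep_start (k0:ℤ) (c0:ℤ) (Int.natCast_nonneg k0) (Int.natCast_nonneg c0) hpoly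
      have claim : ∀ m j, χ = j + m → 2 ≤ j →
          0 < fpan ((j:ℤ)-2) ((n:ℤ)+1-2*(j:ℤ)) := by
        intro m
        induction m with
        | zero =>
          intro j hj h2j
          have hjχ : j = χ := by omega
          subst hjχ
          rw [show ((j:ℤ))-2 = (k0:ℤ) by omega,
            show (n:ℤ)+1-2*(j:ℤ) = (c0:ℤ) by omega]
          exact hfχ
        | succ m ih =>
          intro j hj h2j
          have hstep := ih (j+1) (by omega) (by omega)
          push_cast at hstep
          have hc' : (0:ℤ) ≤ (n:ℤ)+1-2*((j:ℤ)+1) := by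
            have hj1 : j + 1 ≤ χ := by omega
            omega
          have hres := sep_step ((j:ℤ)-2) ((n:ℤ)+1-2*((j:ℤ)+1))
            (by omega) hc'
            (by rw [show ((j:ℤ)-2)+1 = (j:ℤ)+1-2 by ring]; exact hstep)
          rw [show ((n:ℤ)+1-2*((j:ℤ)+1))+2 = (n:ℤ)+1-2*(j:ℤ) by ring] at hres
          exact hres
      have hf := claim (χ - i) i (by omega) hi
      obtain ⟨k1, c1, hk1, hc1⟩ : ∃ k1 c1, k1 = i - 2 ∧ c1 = n + 1 - 2*i :=
        ⟨_, _, rfl, rfl⟩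
      have h2i : 2 * i ≤ n + 1 := by omega
      have hf' : 0 < fpan (k1:ℤ) (c1:ℤ) := by
        rw [show (k1:ℤ) = (i:ℤ)-2 by omega, show (c1:ℤ) = (n:ℤ)+1-2*(i:ℤ) by omega]
        exact hf
      have hineq := pan_of_fpan k1 c1 hf'
      have hPii : sPan i = (k1+c1+1).choose (k1+2)
          + ((k1+c1).choose (k1+1) + (k1+c1+2).choose (k1+1)) := by
        rw [hPan i, if_pos hi1,
          show n-i = k1+c1+1 by omega,
          show k1+c1+1-1 = k1+c1 by omega,
          show k1+c1+1+1 = k1+c1+2 by omega,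
          show i-1 = k1+1 by omega,
          show i = k1+2 by omega]
      have hPim : sPan (i-1) = (k1+c1+2).choose (k1+1)
          + ((k1+c1+1).choose k1 + (k1+c1+3).choose k1) := by
        rw [hPan (i-1), if_pos (by omega : 1 ≤ i - 1),
          show n-(i-1) = k1+c1+2 by omega,
          show k1+c1+2-1 = k1+c1+1 by omega,
          show k1+c1+2+1 = k1+c1+3 by omega,
          show i-1-1 = k1 by omega,
          show i-1 = k1+1 by omega]
      rw [hPim, hPii]
      exact hineq
  · -- Part 2: the identity
    intro i
    rcases Nat.lt_or_ge i 1 with h0 | h1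
    · have hi' : i = 0 := by omega
      subst hi'
      rw [hPan 0, hCE 0, if_neg (by omega : ¬ (1:ℕ) ≤ 0),
        if_neg (by omega : ¬ (1:ℕ) ≤ 0), if_neg (by omega : ¬ (2:ℕ) ≤ 0)]
      simp [Nat.choose_zero_right]
    · rcases Nat.lt_or_ge i 2 with h1' | h2
      · have hi' : i = 1 := by omega
        subst hi'
        rw [hPan 1, hCE 1, if_pos (le_refl 1), if_pos (le_refl 1),
          if_neg (by omega : ¬ (2:ℕ) ≤ 1)]
        have e1 : (n - 1).choose 1 = n - 1 := Nat.choose_one_right _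
        have e2 : (n + 1 - 1).choose 1 = n + 1 - 1 := Nat.choose_one_right _
        have e3 : (n - 1 - 1).choose (1-1) = 1 := Nat.choose_zero_right _
        have e4 : (n - 1 + 1).choose (1-1) = 1 := Nat.choose_zero_right _
        omega
      · rcases Nat.lt_or_ge n i with hgt | hle
        · -- degenerate: i > n, everything vanishes
          rw [hPan i, hCE i, if_pos (by omega : 1 ≤ i), if_pos (by omega : 1 ≤ i),
            if_pos h2]
          have z1 : (n-i).choose i = 0 := Nat.choose_eq_zero_of_lt (by omega)
          have z2 : (n-i-1).choose (i-1) = 0 := Nat.choose_eq_zero_of_lt (by omega)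
          have z3 : (n-i+1).choose (i-1) = 0 := Nat.choose_eq_zero_of_lt (by omega)
          have z4 : (n+1-i).choose i = 0 := Nat.choose_eq_zero_of_lt (by omega)
          have z5 : (n-i).choose (i-2) = 0 := Nat.choose_eq_zero_of_lt (by omega)
          omega
        · -- main case: 2 ≤ i ≤ n, Pascal's rule
          rw [hPan i, hCE i, if_pos (by omega : 1 ≤ i), if_pos (by omega : 1 ≤ i),
            if_pos h2, show n+1-i = (n-i)+1 by omega]
          have p1 : ((n-i)+1).choose i = (n-i).choose (i-1) + (n-i).choose i := by
            have hp := Nat.choose_succ_succ (n-i) (i-1)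
            simp only [Nat.succ_eq_add_one] at hp
            rw [show i-1+1 = i by omega] at hp
            exact hp
          have p2 : ((n-i)+1).choose (i-1)
              = (n-i).choose (i-2) + (n-i).choose (i-1) := by
            have hp := Nat.choose_succ_succ (n-i) (i-2)
            simp only [Nat.succ_eq_add_one] at hp
            rw [show i-2+1 = i-1 by omega] at hp
            exact hp
          have e5 : n-i+1 = (n-i)+1 := rfl
          omega
end

section
/- Let G be the bipartite graph on vertex set V_1 ∪ V_2 ∪ V_3 with |V_1| = n - m, |V_2| = |V_3| = m, whose edges are all edges between V_1 and V_2 together with a perfect matching between V_2 and V_3. Then for every i ≥ 0 the number of independent sets of size i in G equals (2^i - 1)·binomial(m, i) + binomial(n, i). -/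
/-!
Encode `V₁, V₂, V₃` as `inl`, `inr ∘ inl` and `inr ∘ inr` in `α ⊕ β ⊕ β`. An independent set `s`
that avoids `V₂` is an arbitrary subset of `V₁ ∪ V₃`, which has `n` vertices. If `s` meets `V₂`,
it avoids `V₁`, so it is a subset of `V₂ ∪ V₃` containing no matched pair: such an `s` of size `i`
is the same as the `i`-set of matching indices it uses together with the nonempty subset of those
indices lying in `V₂`, giving `(2 ^ i - 1) * m.choose i` sets.
-/

open Finset Polynomial

open Sum

theorem indepCount_eq_card_indepSetFinset {V : Type*} [Fintype V] [DecidableEq V]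
    (G : SimpleGraph V) [DecidableRel G.Adj] (k : ℕ) :
    indepCount G k = #(G.indepSetFinset k) := by
  rw [indepCount, ← Set.ncard_coe_finset]
  congr 1
  ext s
  simp only [Set.mem_ofPred_eq, coe_filter, mem_univ, true_and, SimpleGraph.isNIndepSet_iff,
    SimpleGraph.isIndepSet_iff, Set.Pairwise, mem_coe, SimpleGraph.indepSetFinset]
  exact and_comm.trans (and_congr_left fun _ =>
    ⟨fun h v hv w hw _ => h v hv w hw, fun h v hv w hw hadj => h hv hw hadj.ne hadj⟩)

theorem card_filter_disjoint_toLeft_toRight_ne_empty {β : Type*} [Fintype β] [DecidableEq β]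
    (i : ℕ) :
    #{r : Finset (β ⊕ β) | #r = i ∧ Disjoint r.toLeft r.toRight ∧ r.toLeft ≠ ∅}
      = (Fintype.card β).choose i * (2 ^ i - 1) := by
  have hfibre : ∀ t ∈ (univ : Finset β).powersetCard i, #(t.powerset.erase ∅) = 2 ^ i - 1 := by
    intro t ht
    rw [card_erase_of_mem (empty_mem_powerset t), card_powerset, (mem_powersetCard.1 ht).2]
  rw [← card_univ, ← card_powersetCard, ← smul_eq_mul, ← sum_const, ← sum_congr rfl hfibre,
    ← card_sigma]
  refine card_nbij' (fun r => ⟨r.toLeft ∪ r.toRight, r.toLeft⟩) (fun p => p.2.disjSum (p.1 \ p.2))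
    ?_ ?_ ?_ ?_
  · intro r hr
    simp only [coe_filter, mem_univ, true_and, Set.mem_ofPred_eq] at hr
    obtain ⟨hcard, hdisj, hne⟩ := hr
    simp [card_union_of_disjoint hdisj, card_toLeft_add_card_toRight, hcard, hne]
  · rintro ⟨t, u⟩ h
    simp only [mem_coe, mem_sigma, mem_powersetCard_univ, mem_erase, mem_powerset] at h
    obtain ⟨ht, hne, hut⟩ := h
    simp [card_disjSum, card_sdiff_of_subset hut, ht, hne, disjoint_sdiff,
      Nat.add_sub_cancel' (ht ▸ card_le_card hut)]
  · intro r hr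
    simp only [coe_filter, mem_univ, true_and, Set.mem_ofPred_eq] at hr
    simp [union_sdiff_cancel_left hr.2.1, toLeft_disjSum_toRight]
  · rintro ⟨t, u⟩ h
    simp only [mem_coe, mem_sigma, mem_erase, mem_powerset] at h
    simp [union_sdiff_of_subset h.2.2]

def joinMatchingGraph (α β : Type*) : SimpleGraph (α ⊕ β ⊕ β) :=
  SimpleGraph.fromRel fun v w =>
    (∃ a b, v = inl a ∧ w = inr (inl b)) ∨ (∃ j, v = inr (inl j) ∧ w = inr (inr j))

variable {α β : Type*}

theorem joinMatchingGraph_isIndepSet_iff (s : Finset (α ⊕ β ⊕ β)) :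
    (joinMatchingGraph α β).IsIndepSet ↑s ↔
      (s.toLeft = ∅ ∨ s.toRight.toLeft = ∅) ∧ Disjoint s.toRight.toLeft s.toRight.toRight := by
  simp only [SimpleGraph.isIndepSet_iff, Set.Pairwise, mem_coe, joinMatchingGraph,
    SimpleGraph.fromRel_adj, eq_empty_iff_forall_notMem, disjoint_left, mem_toLeft, mem_toRight]
  constructor
  · intro h
    refine ⟨?_, fun j hl hr => h hl hr (by simp) ⟨by simp, .inl (.inr ⟨j, rfl, rfl⟩)⟩⟩
    by_contra! ⟨⟨a, ha⟩, ⟨b, hb⟩⟩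
    exact h ha hb (by simp) ⟨by simp, .inl (.inl ⟨a, b, rfl, rfl⟩)⟩
  · rintro ⟨hV12, hV23⟩ v hv w hw - ⟨-, (⟨a, b, rfl, rfl⟩ | ⟨j, rfl, rfl⟩) |
      (⟨a, b, rfl, rfl⟩ | ⟨j, rfl, rfl⟩)⟩
    · exact hV12.elim (· a hv) (· b hw)
    · exact hV23 hv hw
    · exact hV12.elim (· a hw) (· b hv)
    · exact hV23 hw hv

variable [Fintype α] [DecidableEq α] [Fintype β] [DecidableEq β]
  [DecidableRel (joinMatchingGraph α β).Adj] {i : ℕ} {s : Finset (α ⊕ β ⊕ β)}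

theorem mem_indepSetFinset_joinMatchingGraph :
    s ∈ (joinMatchingGraph α β).indepSetFinset i ↔
      (s.toLeft = ∅ ∨ s.toRight.toLeft = ∅) ∧ Disjoint s.toRight.toLeft s.toRight.toRight ∧
        #s = i := by
  rw [SimpleGraph.mem_indepSetFinset_iff, SimpleGraph.isNIndepSet_iff,
    joinMatchingGraph_isIndepSet_iff, and_assoc]

variable (i)

theorem card_indepSetFinset_filter_toLeft_toRight_eq_empty :
    #{s ∈ (joinMatchingGraph α β).indepSetFinset i | s.toRight.toLeft = ∅}
      = (Fintype.card α + Fintype.card β).choose i := by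
  let e : α ⊕ β ↪ α ⊕ β ⊕ β := Function.Embedding.sumMap (.refl α) .inr
  have : {s ∈ (joinMatchingGraph α β).indepSetFinset i | s.toRight.toLeft = ∅}
      = powersetCard i (univ.map e) := by
    ext s
    have hsub : s ⊆ univ.map e ↔ s.toRight.toLeft = ∅ := by
      simp only [subset_iff, mem_map, mem_univ, true_and, eq_empty_iff_forall_notMem, mem_toLeft,
        mem_toRight]
      refine ⟨fun h b hb => ?_, fun h v hv => ?_⟩
      · obtain ⟨x, hx⟩ := h hb
        cases x <;> simp [e] at hx
      · rcases v with a | b | c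
        · exact ⟨inl a, rfl⟩
        · exact absurd hv (h b)
        · exact ⟨inr c, rfl⟩
    rw [mem_filter, mem_indepSetFinset_joinMatchingGraph, mem_powersetCard, hsub]
    exact ⟨fun h => ⟨h.2, h.1.2.2⟩, fun ⟨hV2, hcard⟩ => ⟨⟨.inr hV2, by simp [hV2], hcard⟩, hV2⟩⟩
  rw [this, card_powersetCard, card_map, card_univ, Fintype.card_sum]

theorem card_indepSetFinset_filter_toLeft_toRight_ne_empty :
    #{s ∈ (joinMatchingGraph α β).indepSetFinset i | s.toRight.toLeft ≠ ∅}
      = #{r : Finset (β ⊕ β) | #r = i ∧ Disjoint r.toLeft r.toRight ∧ r.toLeft ≠ ∅} := by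
  have hV1 : ∀ s ∈ {s ∈ (joinMatchingGraph α β).indepSetFinset i | s.toRight.toLeft ≠ ∅},
      s.toLeft = ∅ := fun s hs =>
    ((mem_indepSetFinset_joinMatchingGraph.1 (mem_filter.1 hs).1).1).resolve_right
      (mem_filter.1 hs).2
  refine card_nbij' toRight (map .inr) (fun s hs => ?_) (fun r hr => ?_) (fun s hs => ?_)
    (fun r _ => ?_)
  · obtain ⟨hind, hV2⟩ := mem_filter.1 hs
    obtain ⟨-, hdisj, hcard⟩ := mem_indepSetFinset_joinMatchingGraph.1 hind
    simp only [coe_filter, mem_univ, true_and, Set.mem_ofPred_eq]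
    refine ⟨?_, hdisj, hV2⟩
    rw [← hcard, ← card_toLeft_add_card_toRight (u := s), hV1 s hs, card_empty, zero_add]
  · obtain ⟨hcard, hdisj, hV2⟩ : #r = i ∧ Disjoint r.toLeft r.toRight ∧ r.toLeft ≠ ∅ := by
      simpa using hr
    rw [coe_filter, Set.mem_ofPred_eq, mem_indepSetFinset_joinMatchingGraph, ← empty_disjSum,
      toLeft_disjSum, toRight_disjSum, card_disjSum, card_empty, zero_add]
    exact ⟨⟨.inl rfl, hdisj, hcard⟩, hV2⟩
  · rw [← empty_disjSum, ← hV1 s hs, toLeft_disjSum_toRight]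
  · rw [← empty_disjSum, toRight_disjSum]

theorem card_indepSetFinset_joinMatchingGraph :
    #((joinMatchingGraph α β).indepSetFinset i)
      = (Fintype.card α + Fintype.card β).choose i + (Fintype.card β).choose i * (2 ^ i - 1) := by
  rw [← card_filter_add_card_filter_not (fun s => s.toRight.toLeft = ∅),
    card_indepSetFinset_filter_toLeft_toRight_eq_empty,
    card_indepSetFinset_filter_toLeft_toRight_ne_empty,
    card_filter_disjoint_toLeft_toRight_ne_empty]

theorem stmt17_general (n m : ℕ) (hmn : m < n)
    (G : SimpleGraph (Fin (n - m) ⊕ Fin m ⊕ Fin m))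
    (hG : G = SimpleGraph.fromRel (fun v w =>
      (∃ a b, v = Sum.inl a ∧ w = Sum.inr (Sum.inl b)) ∨
      (∃ j, v = Sum.inr (Sum.inl j) ∧ w = Sum.inr (Sum.inr j)))) (i : ℕ) :
    indepCount G i = (2 ^ i - 1) * m.choose i + n.choose i := by
  classical
  subst hG
  change indepCount (joinMatchingGraph (Fin (n - m)) (Fin m)) i = _
  rw [indepCount_eq_card_indepSetFinset, card_indepSetFinset_joinMatchingGraph,
    Fintype.card_fin, Fintype.card_fin, Nat.sub_add_cancel hmn.le, Nat.add_comm, Nat.mul_comm]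

theorem stmt17 (n m : ℕ) (hm : 0 < m) (hmn : m < n)
    (G : SimpleGraph (Fin (n - m) ⊕ Fin m ⊕ Fin m))
    (hG : G = SimpleGraph.fromRel (fun v w =>
      (∃ a b, v = Sum.inl a ∧ w = Sum.inr (Sum.inl b)) ∨
      (∃ j, v = Sum.inr (Sum.inl j) ∧ w = Sum.inr (Sum.inr j)))) (i : ℕ) :
    indepCount G i = (2 ^ i - 1) * m.choose i + n.choose i :=
  stmt17_general n m hmn G hG i
end

section
/- For all real n ≥ 5, the inequality ⌈(5n-4-√(5n²-4))/10⌉ ≤ ⌈(5(n-4)+2-√(5(n-4)²+20(n-4)+24))/10⌉ + 1 holds for integer n; equivalently, with ρ_n and λ_n as defined, ρ_n ≤ λ_{n-4} + 1. A sufficient step is: for all n ≥ 5, 2√(5n²-20n+24) ≤ 5n - 11, i.e., 5(n-1)(n-5) ≥ 0 implies 4(5n²-20n+24) ≤ (5n-11)². -/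
theorem stmt19 (n : ℕ) (hn : 5 ≤ n) :
    rho n ≤ lam (n - 4) + 1 ∧
    2 * Real.sqrt (5 * (n : ℝ) ^ 2 - 20 * (n : ℝ) + 24) ≤ 5 * (n : ℝ) - 11 := by
  have hx : (5 : ℝ) ≤ (n : ℝ) := by exact_mod_cast hn
  set x : ℝ := (n : ℝ) with hxdef
  have hA0 : (0 : ℝ) ≤ 5 * x ^ 2 - 20 * x + 24 := by nlinarith
  have hB0 : (0 : ℝ) ≤ 5 * x ^ 2 - 4 := by nlinarith
  have hsA := Real.sq_sqrt hA0
  have hsA0 := Real.sqrt_nonneg (5 * x ^ 2 - 20 * x + 24)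
  have key : 2 * Real.sqrt (5 * x ^ 2 - 20 * x + 24) ≤ 5 * x - 11 := by
    nlinarith [sq_nonneg (2 * Real.sqrt (5 * x ^ 2 - 20 * x + 24) - (5 * x - 11))]
  refine ⟨?_, key⟩
  have hsqrt : Real.sqrt (5 * x ^ 2 - 4) ≥ Real.sqrt (5 * x ^ 2 - 20 * x + 24) + 4 := by
    have h4 : (0 : ℝ) ≤ Real.sqrt (5 * x ^ 2 - 20 * x + 24) + 4 := by linarith
    rw [ge_iff_le, ← Real.sqrt_sq h4]
    apply Real.sqrt_le_sqrt
    nlinarith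
  have hcast : ((n - 4 : ℕ) : ℝ) = x - 4 := by
    have : (4 : ℕ) ≤ n := by omega
    push_cast [Nat.cast_sub this]
    ring
  unfold rho lam
  rw [hcast, ← Int.ceil_add_one]
  apply Int.ceil_le_ceil
  have h10 : (0 : ℝ) < 10 := by norm_num
  rw [div_add' _ _ _ (ne_of_gt h10), div_le_div_iff₀ h10 h10]
  have harg : 5 * (x - 4) ^ 2 + 20 * (x - 4) + 24 = 5 * x ^ 2 - 20 * x + 24 := by ring
  rw [harg]
  nlinarith
end
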